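/- arXiv:math/0304162 — 10 statements merged into one kernel-verified Lean document; each statement's English description precedes it below -/
import Mathlib

section
/- If m ∈ ℤ^r is determinantal and k ∈ {1,…,r} is such that P_k(m) ≠ ∅, then max{−d_k, −l_k} ≤ m_k ≤ d_k·(n+1) − 1 + min{d_k − l_k, 0}. -/
open Finset

/-- `n = l₁ + ⋯ + l_r`, as an integer. -/
def nDim {r : ℕ} (l : Fin r → ℕ) : ℤ := ∑ k, (l k : ℤ)

/-- The defect vector: `δ_k = l_k − ⌈l_k / d_k⌉`. -/
def defect {r : ℕ} (l d : Fin r → ℕ) (k : Fin r) : ℤ :=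
  (l k : ℤ) - ⌈(l k : ℚ) / (d k : ℚ)⌉

/-- `P_k(m) = {p ∈ ℤ : m_k/d_k < p ≤ (m_k + l_k)/d_k}`. -/
def Pset {r : ℕ} (l d : Fin r → ℕ) (m : Fin r → ℤ) (k : Fin r) : Set ℤ :=
  {p : ℤ | (m k : ℚ) / (d k : ℚ) < (p : ℚ) ∧
    (p : ℚ) ≤ ((m k : ℚ) + (l k : ℚ)) / (d k : ℚ)}

/-- The `(p,J)`-summand of `m` is nonzero: `m_k − p d_k ≤ −l_k − 1` for `k ∈ J`
and `m_k − p d_k ≥ 0` for `k ∉ J`. -/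
def SummandNonzero {r : ℕ} (l d : Fin r → ℕ) (m : Fin r → ℤ) (p : ℤ)
    (J : Finset (Fin r)) : Prop :=
  (∀ k ∈ J, m k - p * d k ≤ -(l k : ℤ) - 1) ∧ ∀ k ∉ J, 0 ≤ m k - p * d k

/-- `K_ν(m) = 0`: every `(p,J)`-summand with `p ∈ {0,…,n+1}` and
`p − Σ_{k∈J} l_k = ν` is zero. -/
def Kvanish {r : ℕ} (l d : Fin r → ℕ) (m : Fin r → ℤ) (ν : ℤ) : Prop :=
  ∀ p : ℤ, 0 ≤ p → p ≤ nDim l + 1 →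
    ∀ J : Finset (Fin r), p - ∑ k ∈ J, (l k : ℤ) = ν → ¬ SummandNonzero l d m p J

/-- `m` is determinantal iff `K_{-1}(m) = 0` and `K_2(m) = 0`. -/
def Determinantal {r : ℕ} (l d : Fin r → ℕ) (m : Fin r → ℤ) : Prop :=
  Kvanish l d m (-1) ∧ Kvanish l d m 2

open scoped Classical in
/-- The dimension of the `(p,J)`-summand of `m`. -/
noncomputable def dimSummand {r : ℕ} (l d : Fin r → ℕ) (m : Fin r → ℤ) (p : ℤ)
    (J : Finset (Fin r)) : ℕ :=
  if SummandNonzero l d m p J then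
    (∏ k ∈ J, (p * d k - m k - 1).toNat.choose (l k)) *
      ∏ k ∈ Jᶜ, (m k - p * d k + l k).toNat.choose (l k)
  else 0

open scoped Classical in
/-- `dim K_ν(m)`. -/
noncomputable def dimK {r : ℕ} (l d : Fin r → ℕ) (m : Fin r → ℤ) (ν : ℤ) : ℕ :=
  ∑ p ∈ Finset.range ((∑ k, l k) + 2),
    ((∑ k, l k) + 1).choose p *
      ∑ J ∈ Finset.univ.filter
          (fun J : Finset (Fin r) => (p : ℤ) - ∑ k ∈ J, (l k : ℤ) = ν),
        dimSummand l d m (p : ℤ) J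

/-- `m′`: agrees with `m` except `m′_k = m_k + d_k − [m_k]_k − 1`. -/
def mprime {r : ℕ} (d : Fin r → ℕ) (m : Fin r → ℤ) (k : Fin r) : Fin r → ℤ :=
  Function.update m k (m k + d k - m k % (d k : ℤ) - 1)

/-- `m″`: agrees with `m` except `m″_k = m_k − [m_k + l_k]_k`. -/
def msecond {r : ℕ} (l d : Fin r → ℕ) (m : Fin r → ℤ) (k : Fin r) : Fin r → ℤ :=
  Function.update m k (m k - (m k + l k) % (d k : ℤ))

/-- The critical degree vector `ρ_k = (n+1) d_k − l_k − 1`. -/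
def critical {r : ℕ} (l d : Fin r → ℕ) (k : Fin r) : ℤ :=
  (nDim l + 1) * d k - l k - 1

/-- `m` yields a pure Sylvester-type matrix. -/
def PureSylvester {r : ℕ} (l d : Fin r → ℕ) (m : Fin r → ℤ) : Prop :=
  (∀ k, 0 ≤ m k) ∧ (∀ k, (d k : ℤ) ≤ m k) ∧ Kvanish l d m (-1) ∧
  ∀ ν : ℤ, (ν = 0 ∨ ν = 1) →
    ∀ p : ℤ, 0 ≤ p → p ≤ nDim l + 1 → ∀ J : Finset (Fin r), J ≠ ∅ →
      p - ∑ k ∈ J, (l k : ℤ) = ν → ¬ SummandNonzero l d m p J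

/-- `m` yields a pure Bézout-type complex. -/
def PureBezout {r : ℕ} (l d : Fin r → ℕ) (m : Fin r → ℤ) : Prop :=
  Kvanish l d m (-1) ∧
  SummandNonzero l d m 0 ∅ ∧
  (∀ p : ℤ, 0 ≤ p → p ≤ nDim l + 1 → ∀ J : Finset (Fin r), J ≠ ∅ →
      p - ∑ k ∈ J, (l k : ℤ) = 0 → ¬ SummandNonzero l d m p J) ∧
  SummandNonzero l d m (nDim l + 1) Finset.univ ∧
  (∀ p : ℤ, 0 ≤ p → p ≤ nDim l + 1 → ∀ J : Finset (Fin r),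
      ¬(p = nDim l + 1 ∧ J = Finset.univ) →
      p - ∑ k ∈ J, (l k : ℤ) = 1 → ¬ SummandNonzero l d m p J)

/-- The Sylvester degree vector `m^π_k = (1 + Σ_{π(j) ≥ π(k)} l_j) d_k − l_k`. -/
def mSyl {r : ℕ} (l d : Fin r → ℕ) (π : Equiv.Perm (Fin r)) (k : Fin r) : ℤ :=
  (1 + ∑ j ∈ Finset.univ.filter (fun j => π k ≤ π j), (l j : ℤ)) * d k - l k

/-- The Bézout degree vector `m^π_k = −l_k + d_k Σ_{π(j) ≥ π(k)} l_j`. -/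
def mBez {r : ℕ} (l d : Fin r → ℕ) (π : Equiv.Perm (Fin r)) (k : Fin r) : ℤ :=
  -(l k : ℤ) + (d k : ℤ) * ∑ j ∈ Finset.univ.filter (fun j => π k ≤ π j), (l j : ℤ)

namespace DetBounds

open Finset

variable {r : ℕ}

/-- `α_j`: the least `p` with `m_j - p d_j < 0`. -/
def al (d : Fin r → ℕ) (m : Fin r → ℤ) (j : Fin r) : ℤ := m j / (d j : ℤ) + 1

/-- `β_j`: the least `p` with `m_j - p d_j ≤ -l_j - 1`. -/
def be (l d : Fin r → ℕ) (m : Fin r → ℤ) (j : Fin r) : ℤ :=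
  (m j + l j) / (d j : ℤ) + 1

/-- coordinate `j` is "in the gap" at `p`. -/
def GapAt (l d : Fin r → ℕ) (m : Fin r → ℤ) (j : Fin r) (p : ℤ) : Prop :=
  al d m j ≤ p ∧ p < be l d m j

/-- `p` is gap-free. -/
def FreeAt (l d : Fin r → ℕ) (m : Fin r → ℤ) (p : ℤ) : Prop :=
  ∀ j, ¬ GapAt l d m j p

/-- `ν(p) = p - Σ_{β_j ≤ p} l_j`. -/
def fval (l d : Fin r → ℕ) (m : Fin r → ℤ) (p : ℤ) : ℤ :=
  p - ∑ j ∈ Finset.univ.filter (fun j => be l d m j ≤ p), (l j : ℤ)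

section
variable {l d : Fin r → ℕ} {m : Fin r → ℤ}

lemma be_le_iff (hd : ∀ j, 0 < d j) (j : Fin r) (p : ℤ) :
    be l d m j ≤ p ↔ m j - p * d j ≤ -(l j : ℤ) - 1 := by
  have hdj : (0 : ℤ) < (d j : ℤ) := by exact_mod_cast hd j
  rw [be, Int.add_one_le_iff, Int.ediv_lt_iff_lt_mul hdj]
  constructor <;> intro h <;> nlinarith

lemma lt_al_iff (hd : ∀ j, 0 < d j) (j : Fin r) (p : ℤ) :
    p < al d m j ↔ 0 ≤ m j - p * d j := by
  have hdj : (0 : ℤ) < (d j : ℤ) := by exact_mod_cast hd j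
  rw [al, Int.lt_add_one_iff, Int.le_ediv_iff_mul_le hdj]
  constructor <;> intro h <;> nlinarith

lemma gapAt_iff (hd : ∀ j, 0 < d j) (j : Fin r) (p : ℤ) :
    GapAt l d m j p ↔ m j < p * d j ∧ p * d j ≤ m j + l j := by
  rw [GapAt, ← not_lt (b := al d m j), lt_al_iff hd, ← not_le (a := be l d m j),
    be_le_iff hd]
  constructor <;> intro h <;> constructor <;> [skip; skip; skip; skip] <;> omega

lemma al_le_be (hd : ∀ j, 0 < d j) (j : Fin r) : al d m j ≤ be l d m j := by
  have hdj : (0 : ℤ) < (d j : ℤ) := by exact_mod_cast hd j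
  have := Int.ediv_le_ediv hdj (by linarith [Int.ofNat_nonneg (l j)] : m j ≤ m j + (l j : ℤ))
  simpa [al, be] using this

lemma be_sub_al_le (hd : ∀ j, 0 < d j) (j : Fin r) :
    be l d m j - al d m j ≤ (l j : ℤ) := by
  have hdj : (0 : ℤ) < (d j : ℤ) := by exact_mod_cast hd j
  have h1 : (l j : ℤ) ≤ (l j : ℤ) * d j := by nlinarith [Int.ofNat_nonneg (l j)]
  have h2 : (m j + (l j : ℤ)) / d j ≤ (m j + (l j : ℤ) * d j) / d j :=
    Int.ediv_le_ediv hdj (by linarith)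
  have h3 : (m j + (l j : ℤ) * d j) / d j = m j / d j + l j :=
    Int.add_mul_ediv_right _ _ (by exact_mod_cast (hd j).ne' : (d j : ℤ) ≠ 0)
  simp only [al, be]
  omega

/-- Covering count: if `[a,b]` is covered by the gaps of `S`, then
`b + 1 - a ≤ Σ_{j ∈ S} l_j`. -/
lemma cover_card (hd : ∀ j, 0 < d j) (S : Finset (Fin r)) (a b : ℤ)
    (h : ∀ t, a ≤ t → t ≤ b → ∃ j ∈ S, GapAt l d m j t) :
    b + 1 - a ≤ ∑ j ∈ S, (l j : ℤ) := by
  have hsub : Finset.Icc a b ⊆ S.biUnion (fun j => Finset.Ico (al d m j) (be l d m j)) := by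
    intro t ht
    rw [Finset.mem_Icc] at ht
    obtain ⟨j, hj, hg⟩ := h t ht.1 ht.2
    exact Finset.mem_biUnion.2 ⟨j, hj, Finset.mem_Ico.2 ⟨hg.1, hg.2⟩⟩
  have h1 : (Finset.Icc a b).card ≤ ∑ j ∈ S, ((be l d m j - al d m j).toNat) := by
    calc (Finset.Icc a b).card ≤ (S.biUnion (fun j => Finset.Ico (al d m j) (be l d m j))).card :=
          Finset.card_le_card hsub
      _ ≤ ∑ j ∈ S, (Finset.Ico (al d m j) (be l d m j)).card := Finset.card_biUnion_le
      _ = ∑ j ∈ S, ((be l d m j - al d m j).toNat) := by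
          simp [Int.card_Ico]
  have h2 : ∑ j ∈ S, ((be l d m j - al d m j).toNat) ≤ ∑ j ∈ S, l j :=
    Finset.sum_le_sum fun j _ => Int.toNat_le.2 (be_sub_al_le hd j)
  calc b + 1 - a ≤ ((b + 1 - a).toNat : ℤ) := Int.self_le_toNat _
    _ = ((Finset.Icc a b).card : ℤ) := by rw [Int.card_Icc]
    _ ≤ ((∑ j ∈ S, l j : ℕ) : ℤ) := by exact_mod_cast le_trans h1 h2
    _ = ∑ j ∈ S, (l j : ℤ) := by push_cast; ring

end

section
variable {l d : Fin r → ℕ} {m : Fin r → ℤ}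

/-- The Künneth summand attached to a gap-free `p` is nonzero, so `ν(p)` avoids
the forbidden values. -/
lemma fval_ne (hd : ∀ j, 0 < d j) {ν : ℤ} (hK : Kvanish l d m ν) (p : ℤ)
    (h0 : 0 ≤ p) (h1 : p ≤ nDim l + 1) (hfree : FreeAt l d m p) :
    fval l d m p ≠ ν := by
  intro hval
  refine hK p h0 h1 (Finset.univ.filter (fun j => be l d m j ≤ p)) ?_ ⟨?_, ?_⟩
  · simpa [fval] using hval
  · intro j hj
    exact (be_le_iff hd j p).1 (Finset.mem_filter.1 hj).2
  · intro j hj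
    have hnb : ¬ be l d m j ≤ p := by
      intro hb; exact hj (Finset.mem_filter.2 ⟨Finset.mem_univ j, hb⟩)
    have hfj := hfree j
    rw [GapAt] at hfj
    push_neg at hfj
    have hpa : p < al d m j := by
      by_contra hcon
      push_neg at hcon
      exact hnb (hfj hcon)
    exact (lt_al_iff hd j p).1 hpa

/-- Crossing a maximal blocked interval raises `ν` by at most one. -/
lemma cross (hd : ∀ j, 0 < d j) {q' q : ℤ} (hlt : q' < q)
    (hf' : FreeAt l d m q') (hf : FreeAt l d m q)
    (hb : ∀ t, q' < t → t < q → ¬ FreeAt l d m t) :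
    fval l d m q ≤ fval l d m q' + 1 := by
  classical
  set A := Finset.univ.filter (fun j => be l d m j ≤ q') with hA
  set B := Finset.univ.filter (fun j => be l d m j ≤ q) with hB
  have hAB : A ⊆ B := by
    intro j hj
    rw [hA, Finset.mem_filter] at hj
    exact Finset.mem_filter.2 ⟨hj.1, le_trans hj.2 (le_of_lt hlt)⟩
  have hcov : ∀ t, q' + 1 ≤ t → t ≤ q - 1 → ∃ j ∈ B \ A, GapAt l d m j t := by
    intro t ht1 ht2
    have hnt : ¬ FreeAt l d m t := hb t (by omega) (by omega)
    rw [FreeAt] at hnt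
    push_neg at hnt
    obtain ⟨j, hj⟩ := hnt
    refine ⟨j, ?_, hj⟩
    obtain ⟨hj1, hj2⟩ := hj
    have hq := hf j
    rw [GapAt] at hq; push_neg at hq
    have hbj : be l d m j ≤ q := hq (by omega)
    have hnA : ¬ be l d m j ≤ q' := by omega
    rw [Finset.mem_sdiff, hA, hB, Finset.mem_filter, Finset.mem_filter]
    exact ⟨⟨Finset.mem_univ j, hbj⟩, fun h => hnA h.2⟩
  have hcard : (q - 1) + 1 - (q' + 1) ≤ ∑ j ∈ B \ A, (l j : ℤ) :=
    cover_card hd _ _ _ hcov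
  have hsum : ∑ j ∈ A, (l j : ℤ) + ∑ j ∈ B \ A, (l j : ℤ) = ∑ j ∈ B, (l j : ℤ) := by
    rw [add_comm]; exact Finset.sum_sdiff hAB
  simp only [fval, ← hA, ← hB]
  omega

/-- Discrete intermediate value theorem along gap-free points. -/
lemma ivt (hd : ∀ j, 0 < d j) :
    ∀ N : ℕ, ∀ p q : ℤ, (q - p).toNat ≤ N → p ≤ q →
      FreeAt l d m p → FreeAt l d m q →
      ∀ w : ℤ, fval l d m p ≤ w → w ≤ fval l d m q →
      ∃ t, p ≤ t ∧ t ≤ q ∧ FreeAt l d m t ∧ fval l d m t = w := by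
  classical
  intro N
  induction N with
  | zero =>
    intro p q hN hpq hfp hfq w hw1 hw2
    have : p = q := by omega
    subst this
    exact ⟨p, le_refl p, le_refl p, hfp, by omega⟩
  | succ N ih =>
    intro p q hN hpq hfp hfq w hw1 hw2
    by_cases hq : fval l d m q = w
    · exact ⟨q, hpq, le_refl q, hfq, hq⟩
    have hplt : p < q := by
      rcases lt_or_eq_of_le hpq with h | h
      · exact h
      · subst h; omega
    set s := (Finset.Icc p (q - 1)).filter (fun t => FreeAt l d m t) with hs
    have hps : p ∈ s := by
      rw [hs, Finset.mem_filter, Finset.mem_Icc]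
      exact ⟨⟨le_refl p, by omega⟩, hfp⟩
    set q₁ := s.max' ⟨p, hps⟩ with hq₁def
    have hq₁mem : q₁ ∈ s := Finset.max'_mem _ _
    rw [hs, Finset.mem_filter, Finset.mem_Icc] at hq₁mem
    have hpq₁ : p ≤ q₁ := hq₁mem.1.1
    have hq₁q : q₁ ≤ q - 1 := hq₁mem.1.2
    have hfq₁ : FreeAt l d m q₁ := hq₁mem.2
    have hmax : ∀ t, q₁ < t → t < q → ¬ FreeAt l d m t := by
      intro t ht1 ht2 hft
      have hts : t ∈ s := by
        rw [hs, Finset.mem_filter, Finset.mem_Icc]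
        exact ⟨⟨by omega, by omega⟩, hft⟩
      have := Finset.le_max' s t hts
      omega
    have hcross : fval l d m q ≤ fval l d m q₁ + 1 :=
      cross hd (by omega) hfq₁ hfq hmax
    by_cases hc : w ≤ fval l d m q₁
    · obtain ⟨t, h1, h2, h3, h4⟩ := ih p q₁ (by omega) hpq₁ hfp hfq₁ w hw1 hc
      exact ⟨t, h1, by omega, h3, h4⟩
    · exfalso; omega

end

section
variable {l d : Fin r → ℕ} {m : Fin r → ℤ}

lemma nDim_nonneg : 0 ≤ nDim l := Finset.sum_nonneg fun j _ => Int.ofNat_nonneg _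

lemma sum_univ_eq : ∑ j : Fin r, (l j : ℤ) = nDim l := rfl

/-- The largest gap-free point `P ≤ n+1` satisfies `ν(P) ≥ 1`. -/
lemma exists_max_free (hd : ∀ j, 0 < d j) :
    ∃ P : ℤ, 0 ≤ P ∧ P ≤ nDim l + 1 ∧ FreeAt l d m P ∧ 1 ≤ fval l d m P ∧
      ∀ t, 0 ≤ t → t ≤ nDim l + 1 → FreeAt l d m t → t ≤ P := by
  classical
  have hn0 : (0 : ℤ) ≤ nDim l := nDim_nonneg
  set s := (Finset.Icc (0 : ℤ) (nDim l + 1)).filter (fun t => FreeAt l d m t) with hs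
  have hne : s.Nonempty := by
    by_contra hcon
    rw [Finset.not_nonempty_iff_eq_empty] at hcon
    have hcov : ∀ t, (0:ℤ) ≤ t → t ≤ nDim l + 1 → ∃ j ∈ Finset.univ, GapAt l d m j t := by
      intro t ht1 ht2
      have hnf : ¬ FreeAt l d m t := by
        intro hf
        have : t ∈ s := by
          rw [hs, Finset.mem_filter, Finset.mem_Icc]; exact ⟨⟨ht1, ht2⟩, hf⟩
        rw [hcon] at this; exact absurd this (Finset.notMem_empty t)
      rw [FreeAt] at hnf; push_neg at hnf
      obtain ⟨j, hj⟩ := hnf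
      exact ⟨j, Finset.mem_univ j, hj⟩
    have := cover_card hd Finset.univ 0 (nDim l + 1) hcov
    rw [sum_univ_eq] at this
    omega
  set P := s.max' hne with hP
  have hPmem : P ∈ s := Finset.max'_mem _ _
  rw [hs, Finset.mem_filter, Finset.mem_Icc] at hPmem
  refine ⟨P, hPmem.1.1, hPmem.1.2, hPmem.2, ?_, ?_⟩
  · -- blocked points of [P+1, n+1] are covered by gaps with al > P
    set S := Finset.univ.filter (fun j => P < al d m j) with hS
    have hcov : ∀ t, P + 1 ≤ t → t ≤ nDim l + 1 → ∃ j ∈ S, GapAt l d m j t := by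
      intro t ht1 ht2
      have hnf : ¬ FreeAt l d m t := by
        intro hf
        have : t ∈ s := by
          rw [hs, Finset.mem_filter, Finset.mem_Icc]
          exact ⟨⟨by omega, ht2⟩, hf⟩
        have := Finset.le_max' s t this
        omega
      rw [FreeAt] at hnf; push_neg at hnf
      obtain ⟨j, hj⟩ := hnf
      obtain ⟨hj1, hj2⟩ := hj
      refine ⟨j, ?_, ⟨hj1, hj2⟩⟩
      have hfp := hPmem.2 j
      rw [GapAt] at hfp; push_neg at hfp
      have : P < al d m j := by
        by_contra hcc
        push_neg at hcc
        have := hfp hcc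
        omega
      rw [hS, Finset.mem_filter]; exact ⟨Finset.mem_univ j, this⟩
    have hcard : nDim l + 1 + 1 - (P + 1) ≤ ∑ j ∈ S, (l j : ℤ) :=
      cover_card hd S (P + 1) (nDim l + 1) hcov
    have hsub : Finset.univ.filter (fun j => be l d m j ≤ P) ⊆ Finset.univ \ S := by
      intro j hj
      rw [Finset.mem_filter] at hj
      rw [Finset.mem_sdiff, hS, Finset.mem_filter]
      refine ⟨Finset.mem_univ j, fun h => ?_⟩
      have := al_le_be (l := l) (m := m) hd j
      omega
    have hle : ∑ j ∈ Finset.univ.filter (fun j => be l d m j ≤ P), (l j : ℤ) ≤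
        ∑ j ∈ Finset.univ \ S, (l j : ℤ) :=
      Finset.sum_le_sum_of_subset_of_nonneg hsub
        (fun j _ _ => Int.ofNat_nonneg _)
    have hsd : ∑ j ∈ Finset.univ \ S, (l j : ℤ) = nDim l - ∑ j ∈ S, (l j : ℤ) := by
      rw [Finset.sum_sdiff_eq_sub (Finset.subset_univ S), sum_univ_eq]
    rw [fval]
    omega
  · intro t ht1 ht2 hft
    refine Finset.le_max' s t ?_
    rw [hs, Finset.mem_filter, Finset.mem_Icc]; exact ⟨⟨ht1, ht2⟩, hft⟩

/-- The smallest gap-free point `P ≥ 0` satisfies `ν(P) ≤ 0`. -/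
lemma exists_min_free (hd : ∀ j, 0 < d j) :
    ∃ P : ℤ, 0 ≤ P ∧ P ≤ nDim l + 1 ∧ FreeAt l d m P ∧ fval l d m P ≤ 0 ∧
      ∀ t, 0 ≤ t → t ≤ nDim l + 1 → FreeAt l d m t → P ≤ t := by
  classical
  have hn0 : (0 : ℤ) ≤ nDim l := nDim_nonneg
  set s := (Finset.Icc (0 : ℤ) (nDim l + 1)).filter (fun t => FreeAt l d m t) with hs
  have hne : s.Nonempty := by
    by_contra hcon
    rw [Finset.not_nonempty_iff_eq_empty] at hcon
    have hcov : ∀ t, (0:ℤ) ≤ t → t ≤ nDim l + 1 → ∃ j ∈ Finset.univ, GapAt l d m j t := by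
      intro t ht1 ht2
      have hnf : ¬ FreeAt l d m t := by
        intro hf
        have : t ∈ s := by
          rw [hs, Finset.mem_filter, Finset.mem_Icc]; exact ⟨⟨ht1, ht2⟩, hf⟩
        rw [hcon] at this; exact absurd this (Finset.notMem_empty t)
      rw [FreeAt] at hnf; push_neg at hnf
      obtain ⟨j, hj⟩ := hnf
      exact ⟨j, Finset.mem_univ j, hj⟩
    have := cover_card hd Finset.univ 0 (nDim l + 1) hcov
    rw [sum_univ_eq] at this
    omega
  set P := s.min' hne with hP
  have hPmem : P ∈ s := Finset.min'_mem _ _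
  rw [hs, Finset.mem_filter, Finset.mem_Icc] at hPmem
  refine ⟨P, hPmem.1.1, hPmem.1.2, hPmem.2, ?_, ?_⟩
  · set S := Finset.univ.filter (fun j => be l d m j ≤ P) with hS
    have hcov : ∀ t, (0:ℤ) ≤ t → t ≤ P - 1 → ∃ j ∈ S, GapAt l d m j t := by
      intro t ht1 ht2
      have hnf : ¬ FreeAt l d m t := by
        intro hf
        have : t ∈ s := by
          rw [hs, Finset.mem_filter, Finset.mem_Icc]
          exact ⟨⟨ht1, by omega⟩, hf⟩
        have := Finset.min'_le s t this
        omega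
      rw [FreeAt] at hnf; push_neg at hnf
      obtain ⟨j, hj⟩ := hnf
      obtain ⟨hj1, hj2⟩ := hj
      refine ⟨j, ?_, ⟨hj1, hj2⟩⟩
      have hfp := hPmem.2 j
      rw [GapAt] at hfp; push_neg at hfp
      have : be l d m j ≤ P := hfp (by omega)
      rw [hS, Finset.mem_filter]; exact ⟨Finset.mem_univ j, this⟩
    have hcard : P - 1 + 1 - 0 ≤ ∑ j ∈ S, (l j : ℤ) :=
      cover_card hd S 0 (P - 1) hcov
    rw [fval, ← hS]
    omega
  · intro t ht1 ht2 hft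
    refine Finset.min'_le s t ?_
    rw [hs, Finset.mem_filter, Finset.mem_Icc]; exact ⟨⟨ht1, ht2⟩, hft⟩

end

section
variable {l d : Fin r → ℕ} {m : Fin r → ℤ}

lemma lk_le_nDim (k : Fin r) : (l k : ℤ) ≤ nDim l :=
  Finset.single_le_sum (fun j _ => Int.ofNat_nonneg (l j)) (Finset.mem_univ k)

/-- If `k`'s (nonempty) gap starts below `0`, there is a gap-free point in
`[0, n+1]` with `ν ≤ -1`. -/
lemma exists_lo (hl : ∀ j, 0 < l j) (hd : ∀ j, 0 < d j) (k : Fin r)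
    (hak : al d m k ≤ -1) (hab : al d m k < be l d m k) :
    ∃ P : ℤ, 0 ≤ P ∧ P ≤ nDim l + 1 ∧ FreeAt l d m P ∧ fval l d m P ≤ -1 := by
  classical
  have hn0 : (0 : ℤ) ≤ nDim l := nDim_nonneg
  have hlk : (1 : ℤ) ≤ (l k : ℤ) := by exact_mod_cast hl k
  have hlkn : (l k : ℤ) ≤ nDim l := lk_le_nDim k
  have hba : be l d m k - al d m k ≤ (l k : ℤ) := be_sub_al_le hd k
  set c := max (be l d m k) 0 with hc
  have hc0 : (0 : ℤ) ≤ c := le_max_right _ _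
  have hcb : be l d m k ≤ c := le_max_left _ _
  have hcl : c ≤ (l k : ℤ) - 1 := by
    rw [hc]; apply max_le <;> omega
  set s := (Finset.Icc c (nDim l + 1)).filter (fun t => FreeAt l d m t) with hs
  have hne : s.Nonempty := by
    by_contra hcon
    rw [Finset.not_nonempty_iff_eq_empty] at hcon
    have hcov : ∀ t, c ≤ t → t ≤ nDim l + 1 →
        ∃ j ∈ Finset.univ.erase k, GapAt l d m j t := by
      intro t ht1 ht2
      have hnf : ¬ FreeAt l d m t := by
        intro hf
        have : t ∈ s := by
          rw [hs, Finset.mem_filter, Finset.mem_Icc]; exact ⟨⟨ht1, ht2⟩, hf⟩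
        rw [hcon] at this; exact absurd this (Finset.notMem_empty t)
      rw [FreeAt] at hnf; push_neg at hnf
      obtain ⟨j, hj⟩ := hnf
      refine ⟨j, Finset.mem_erase.2 ⟨?_, Finset.mem_univ j⟩, hj⟩
      intro hjk
      subst hjk
      have := hj.2
      omega
    have hcard := cover_card hd (Finset.univ.erase k) c (nDim l + 1) hcov
    have hsum : ∑ j ∈ Finset.univ.erase k, (l j : ℤ) = nDim l - l k := by
      rw [Finset.sum_erase_eq_sub (Finset.mem_univ k), sum_univ_eq]
    omega
  set P := s.min' hne with hP
  have hPmem : P ∈ s := Finset.min'_mem _ _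
  rw [hs, Finset.mem_filter, Finset.mem_Icc] at hPmem
  have hcP : c ≤ P := hPmem.1.1
  refine ⟨P, by omega, hPmem.1.2, hPmem.2, ?_⟩
  set S := (Finset.univ.filter (fun j => be l d m j ≤ P)) with hS
  have hkS : k ∈ S := by
    rw [hS, Finset.mem_filter]; exact ⟨Finset.mem_univ k, by omega⟩
  have hcov : ∀ t, c ≤ t → t ≤ P - 1 → ∃ j ∈ S.erase k, GapAt l d m j t := by
    intro t ht1 ht2
    have hnf : ¬ FreeAt l d m t := by
      intro hf
      have : t ∈ s := by
        rw [hs, Finset.mem_filter, Finset.mem_Icc]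
        exact ⟨⟨ht1, by omega⟩, hf⟩
      have := Finset.min'_le s t this
      omega
    rw [FreeAt] at hnf; push_neg at hnf
    obtain ⟨j, hj⟩ := hnf
    obtain ⟨hj1, hj2⟩ := hj
    have hjk : j ≠ k := by
      intro hjk; subst hjk; omega
    have hfp := hPmem.2 j
    rw [GapAt] at hfp; push_neg at hfp
    have hbj : be l d m j ≤ P := hfp (by omega)
    refine ⟨j, Finset.mem_erase.2 ⟨hjk, ?_⟩, ⟨hj1, hj2⟩⟩
    rw [hS, Finset.mem_filter]; exact ⟨Finset.mem_univ j, hbj⟩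
  have hcard : P - 1 + 1 - c ≤ ∑ j ∈ S.erase k, (l j : ℤ) :=
    cover_card hd _ c (P - 1) hcov
  have hsum : ∑ j ∈ S.erase k, (l j : ℤ) = ∑ j ∈ S, (l j : ℤ) - l k :=
    Finset.sum_erase_eq_sub hkS
  rw [fval, ← hS]
  omega

/-- If `k`'s (nonempty) gap ends above `n+2`, there is a gap-free point in
`[0, n+1]` with `ν ≥ 2`. -/
lemma exists_hi (hl : ∀ j, 0 < l j) (hd : ∀ j, 0 < d j) (k : Fin r)
    (hbk : nDim l + 3 ≤ be l d m k) :
    ∃ P : ℤ, 0 ≤ P ∧ P ≤ nDim l + 1 ∧ FreeAt l d m P ∧ 2 ≤ fval l d m P := by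
  classical
  have hn0 : (0 : ℤ) ≤ nDim l := nDim_nonneg
  have hlk : (1 : ℤ) ≤ (l k : ℤ) := by exact_mod_cast hl k
  have hlkn : (l k : ℤ) ≤ nDim l := lk_le_nDim k
  have hba : be l d m k - al d m k ≤ (l k : ℤ) := be_sub_al_le hd k
  set c := min (al d m k - 1) (nDim l + 1) with hc
  have hc1 : c ≤ al d m k - 1 := min_le_left _ _
  have hc2 : c ≤ nDim l + 1 := min_le_right _ _
  have hc3 : nDim l + 2 - l k ≤ c := by
    rw [hc]; apply le_min <;> omega
  set s := (Finset.Icc (0:ℤ) c).filter (fun t => FreeAt l d m t) with hs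
  have hne : s.Nonempty := by
    by_contra hcon
    rw [Finset.not_nonempty_iff_eq_empty] at hcon
    have hcov : ∀ t, (0:ℤ) ≤ t → t ≤ c →
        ∃ j ∈ Finset.univ.erase k, GapAt l d m j t := by
      intro t ht1 ht2
      have hnf : ¬ FreeAt l d m t := by
        intro hf
        have : t ∈ s := by
          rw [hs, Finset.mem_filter, Finset.mem_Icc]; exact ⟨⟨ht1, ht2⟩, hf⟩
        rw [hcon] at this; exact absurd this (Finset.notMem_empty t)
      rw [FreeAt] at hnf; push_neg at hnf
      obtain ⟨j, hj⟩ := hnf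
      refine ⟨j, Finset.mem_erase.2 ⟨?_, Finset.mem_univ j⟩, hj⟩
      intro hjk
      subst hjk
      have := hj.1
      omega
    have hcard := cover_card hd (Finset.univ.erase k) 0 c hcov
    have hsum : ∑ j ∈ Finset.univ.erase k, (l j : ℤ) = nDim l - l k := by
      rw [Finset.sum_erase_eq_sub (Finset.mem_univ k), sum_univ_eq]
    omega
  set P := s.max' hne with hP
  have hPmem : P ∈ s := Finset.max'_mem _ _
  rw [hs, Finset.mem_filter, Finset.mem_Icc] at hPmem
  have hPc : P ≤ c := hPmem.1.2
  refine ⟨P, hPmem.1.1, by omega, hPmem.2, ?_⟩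
  set A := Finset.univ.filter (fun j => P < al d m j) with hA
  have hkA : k ∈ A := by
    rw [hA, Finset.mem_filter]; exact ⟨Finset.mem_univ k, by omega⟩
  have hcov : ∀ t, P + 1 ≤ t → t ≤ c → ∃ j ∈ A.erase k, GapAt l d m j t := by
    intro t ht1 ht2
    have hnf : ¬ FreeAt l d m t := by
      intro hf
      have : t ∈ s := by
        rw [hs, Finset.mem_filter, Finset.mem_Icc]
        exact ⟨⟨by omega, ht2⟩, hf⟩
      have := Finset.le_max' s t this
      omega
    rw [FreeAt] at hnf; push_neg at hnf
    obtain ⟨j, hj⟩ := hnf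
    obtain ⟨hj1, hj2⟩ := hj
    have hjk : j ≠ k := by
      intro hjk; subst hjk; omega
    have hfp := hPmem.2 j
    rw [GapAt] at hfp; push_neg at hfp
    have haj : P < al d m j := by
      by_contra hcc
      push_neg at hcc
      have := hfp hcc
      omega
    refine ⟨j, Finset.mem_erase.2 ⟨hjk, ?_⟩, ⟨hj1, hj2⟩⟩
    rw [hA, Finset.mem_filter]; exact ⟨Finset.mem_univ j, haj⟩
  have hcard : c + 1 - (P + 1) ≤ ∑ j ∈ A.erase k, (l j : ℤ) :=
    cover_card hd _ (P + 1) c hcov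
  have hsumA : ∑ j ∈ A.erase k, (l j : ℤ) = ∑ j ∈ A, (l j : ℤ) - l k :=
    Finset.sum_erase_eq_sub hkA
  have hsub : Finset.univ.filter (fun j => be l d m j ≤ P) ⊆ Finset.univ \ A := by
    intro j hj
    rw [Finset.mem_filter] at hj
    rw [Finset.mem_sdiff, hA, Finset.mem_filter]
    refine ⟨Finset.mem_univ j, fun h => ?_⟩
    have := al_le_be (l := l) (m := m) hd j
    omega
  have hle : ∑ j ∈ Finset.univ.filter (fun j => be l d m j ≤ P), (l j : ℤ) ≤
      ∑ j ∈ Finset.univ \ A, (l j : ℤ) :=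
    Finset.sum_le_sum_of_subset_of_nonneg hsub (fun j _ _ => Int.ofNat_nonneg _)
  have hsd : ∑ j ∈ Finset.univ \ A, (l j : ℤ) = nDim l - ∑ j ∈ A, (l j : ℤ) := by
    rw [Finset.sum_sdiff_eq_sub (Finset.subset_univ A), sum_univ_eq]
  rw [fval]
  omega

end

section
variable {l d : Fin r → ℕ} {m : Fin r → ℤ}

/-- Any point of `P_k(m)` lies in `[0, n+1]` when `m` is determinantal. -/
lemma gap_bounds (hl : ∀ j, 0 < l j) (hd : ∀ j, 0 < d j)
    (hdet : Determinantal l d m) (k : Fin r) (p₀ : ℤ)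
    (hg : GapAt l d m k p₀) : 0 ≤ p₀ ∧ p₀ ≤ nDim l + 1 := by
  obtain ⟨hg1, hg2⟩ := hg
  constructor
  · by_contra hcon
    push_neg at hcon
    have hak : al d m k ≤ -1 := by omega
    obtain ⟨Plo, h1, h2, h3, h4⟩ := exists_lo hl hd k hak (by omega)
    obtain ⟨P, hP1, hP2, hP3, hP4, hP5⟩ := exists_max_free (l := l) (d := d) (m := m) hd
    have hle : Plo ≤ P := hP5 Plo h1 h2 h3
    obtain ⟨t, ht1, ht2, ht3, ht4⟩ :=
      ivt hd (P - Plo).toNat Plo P (le_refl _) hle h3 hP3 (-1) h4 (by omega)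
    exact fval_ne hd hdet.1 t (by omega) (by omega) ht3 ht4
  · by_contra hcon
    push_neg at hcon
    have hbk : nDim l + 3 ≤ be l d m k := by omega
    obtain ⟨Phi, h1, h2, h3, h4⟩ := exists_hi hl hd k hbk
    obtain ⟨P, hP1, hP2, hP3, hP4, hP5⟩ := exists_min_free (l := l) (d := d) (m := m) hd
    have hle : P ≤ Phi := hP5 Phi h1 h2 h3
    obtain ⟨t, ht1, ht2, ht3, ht4⟩ :=
      ivt hd (Phi - P).toNat P Phi (le_refl _) hle hP3 h3 2 (by omega) h4
    exact fval_ne hd hdet.2 t (by omega) (by omega) ht3 ht4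

end

end DetBounds

/-- Bounds for the coordinates of a determinantal degree vector `m` at indices `k`
with `P_k(m) ≠ ∅`. -/
theorem determinantal_bounds_nonempty (r : ℕ) (hr : 0 < r) (l d : Fin r → ℕ) (hl : ∀ k, 0 < l k) (hd : ∀ k, 0 < d k)
    (m : Fin r → ℤ) (hdet : Determinantal l d m) (k : Fin r)
    (hP : (Pset l d m k).Nonempty) :
    max (-(d k : ℤ)) (-(l k : ℤ)) ≤ m k ∧
    m k ≤ (d k : ℤ) * (nDim l + 1) - 1 + min ((d k : ℤ) - l k) 0 := by
  classical
  obtain ⟨p₀, hp₀⟩ := hP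
  obtain ⟨hq1, hq2⟩ := hp₀
  have hdk : (0 : ℚ) < (d k : ℚ) := by exact_mod_cast hd k
  have hdkz : (0 : ℤ) < (d k : ℤ) := by exact_mod_cast hd k
  have h1 : m k < p₀ * d k := by
    have := (div_lt_iff₀ hdk).1 hq1
    exact_mod_cast this
  have h2 : p₀ * (d k : ℤ) ≤ m k + l k := by
    have := (le_div_iff₀ hdk).1 hq2
    exact_mod_cast this
  have hgap : DetBounds.GapAt l d m k p₀ :=
    (DetBounds.gapAt_iff hd k p₀).2 ⟨h1, h2⟩
  have halbe : DetBounds.al d m k ≤ p₀ ∧ p₀ < DetBounds.be l d m k := hgap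
  have hgapA : DetBounds.GapAt l d m k (DetBounds.al d m k) :=
    ⟨le_refl _, by omega⟩
  have hgapB : DetBounds.GapAt l d m k (DetBounds.be l d m k - 1) :=
    ⟨by omega, by omega⟩
  obtain ⟨hA0, hA1⟩ := DetBounds.gap_bounds hl hd hdet k _ hgapA
  obtain ⟨hB0, hB1⟩ := DetBounds.gap_bounds hl hd hdet k _ hgapB
  -- translate back to inequalities on `m k`
  have hmd : -(d k : ℤ) ≤ m k := by
    have : -1 ≤ m k / (d k : ℤ) := by
      have := hA0; rw [DetBounds.al] at this; omega
    have := (Int.le_ediv_iff_mul_le hdkz).1 this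
    linarith
  have hml : -(l k : ℤ) ≤ m k := by
    have hbe1 : 1 ≤ DetBounds.be l d m k := by omega
    have : 0 ≤ (m k + (l k : ℤ)) / (d k : ℤ) := by
      rw [DetBounds.be] at hbe1; omega
    have := (Int.le_ediv_iff_mul_le hdkz).1 this
    linarith
  have hup1 : m k ≤ (d k : ℤ) * (nDim l + 1) - 1 := by
    have hlt : m k / (d k : ℤ) < nDim l + 1 := by
      rw [DetBounds.al] at hA1; omega
    have := (Int.ediv_lt_iff_lt_mul hdkz).1 hlt
    linarith
  have hup2 : m k ≤ (d k : ℤ) * (nDim l + 2) - l k - 1 := by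
    have hlt : (m k + (l k : ℤ)) / (d k : ℤ) < nDim l + 2 := by
      rw [DetBounds.be] at hB1; omega
    have := (Int.ediv_lt_iff_lt_mul hdkz).1 hlt
    linarith
  refine ⟨max_le hmd hml, ?_⟩
  rcases min_cases ((d k : ℤ) - l k) 0 with ⟨heq, _⟩ | ⟨heq, _⟩ <;> rw [heq] <;> linarith
end

section
/- Let m ∈ ℤ^r and k ∈ {1,…,r} with P_k(m) = ∅. Then P_k(m′) ≠ ∅, and for every integer p: if m_k < p·d_k then m′_k < p·d_k (i.e. vanishing of H^0(ℙ^{l_k}, m_k − p·d_k) implies vanishing of H^0(ℙ^{l_k}, m′_k − p·d_k)), and if m_k − p·d_k ≥ −l_k then m′_k − p·d_k ≥ −l_k (i.e. vanishing of H^{l_k}(ℙ^{l_k}, m_k − p·d_k) implies vanishing of H^{l_k}(ℙ^{l_k}, m′_k − p·d_k)). -/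
open Finset

/-- If `P_k(m) = ∅`, then `P_k(m′) ≠ ∅`, and for every integer `p` the vanishing of
`H^0(ℙ^{l_k}, m_k − p d_k)` (resp. `H^{l_k}(ℙ^{l_k}, m_k − p d_k)`) implies the vanishing of
the corresponding cohomology for `m′_k`. -/
theorem mprime_properties (r : ℕ) (hr : 0 < r) (l d : Fin r → ℕ) (hl : ∀ k, 0 < l k) (hd : ∀ k, 0 < d k)
    (m : Fin r → ℤ) (k : Fin r) (hP : Pset l d m k = ∅) :
    (Pset l d (mprime d m k) k).Nonempty ∧
    ∀ p : ℤ,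
      (m k < p * d k → mprime d m k k < p * d k) ∧
      (-(l k : ℤ) ≤ m k - p * d k → -(l k : ℤ) ≤ mprime d m k k - p * d k) := by
  have hD : (0:ℤ) < (d k : ℤ) := by exact_mod_cast hd k
  have hQ : (0:ℚ) < (d k : ℚ) := by exact_mod_cast hd k
  have hl1 : (1:ℤ) ≤ (l k : ℤ) := by exact_mod_cast hl k
  have hval : mprime d m k k = (m k / d k + 1) * d k - 1 := by
    simp only [mprime, Function.update_self, Int.emod_def]
    ring
  have h1 := Int.emod_nonneg (m k) (ne_of_gt hD)
  have h2 := Int.emod_lt_of_pos (m k) hD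
  refine ⟨⟨m k / d k + 1, ?_, ?_⟩, ?_⟩
  · rw [div_lt_iff₀ hQ]
    have h : mprime d m k k < (m k / d k + 1) * d k := by omega
    exact_mod_cast h
  · rw [le_div_iff₀ hQ]
    have h : (m k / d k + 1) * d k ≤ mprime d m k k + l k := by omega
    exact_mod_cast h
  · intro p
    constructor
    · intro h
      have hdiv : m k / d k < p := (Int.ediv_lt_iff_lt_mul hD).mpr h
      have : (m k / d k + 1) * d k ≤ p * d k :=
        mul_le_mul_of_nonneg_right (by omega) (le_of_lt hD)
      omega
    · intro h
      have : m k ≤ mprime d m k k := by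
        simp only [mprime, Function.update_self]; omega
      omega
end

section
/- Let m ∈ ℤ^r and k ∈ {1,…,r} with P_k(m) = ∅. Then P_k(m″) ≠ ∅, and for every integer p: if m_k < p·d_k then m″_k < p·d_k (i.e. vanishing of H^0(ℙ^{l_k}, m_k − p·d_k) implies vanishing of H^0(ℙ^{l_k}, m″_k − p·d_k)), and if m_k − p·d_k ≥ −l_k then m″_k − p·d_k ≥ −l_k (i.e. vanishing of H^{l_k}(ℙ^{l_k}, m_k − p·d_k) implies vanishing of H^{l_k}(ℙ^{l_k}, m″_k − p·d_k)). -/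
open Finset

/-- If `P_k(m) = ∅`, then `P_k(m″) ≠ ∅`, and for every integer `p` the vanishing of
`H^0(ℙ^{l_k}, m_k − p d_k)` (resp. `H^{l_k}(ℙ^{l_k}, m_k − p d_k)`) implies the vanishing of
the corresponding cohomology for `m″_k`. -/
theorem msecond_properties (r : ℕ) (hr : 0 < r) (l d : Fin r → ℕ) (hl : ∀ k, 0 < l k) (hd : ∀ k, 0 < d k)
    (m : Fin r → ℤ) (k : Fin r) (hP : Pset l d m k = ∅) :
    (Pset l d (msecond l d m k) k).Nonempty ∧
    ∀ p : ℤ,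
      (m k < p * d k → msecond l d m k k < p * d k) ∧
      (-(l k : ℤ) ≤ m k - p * d k → -(l k : ℤ) ≤ msecond l d m k k - p * d k) := by
  have hd0 : (0:ℤ) < d k := by exact_mod_cast hd k
  have hl0 : (0:ℤ) < l k := by exact_mod_cast hl k
  have hmk : msecond l d m k k = m k - (m k + l k) % (d k : ℤ) := by
    simp [msecond]
  have hs0 : 0 ≤ (m k + l k) % (d k : ℤ) := Int.emod_nonneg _ hd0.ne'
  have hsd : (m k + l k) % (d k : ℤ) < d k := Int.emod_lt_of_pos _ hd0
  have hdiv := Int.emod_add_mul_ediv (m k + l k) (d k)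
  have hdQ : (0:ℚ) < (d k : ℚ) := by exact_mod_cast hd0
  constructor
  · refine ⟨(m k + l k) / d k, ?_, ?_⟩
    · rw [div_lt_iff₀ hdQ, hmk]
      have h : m k - (m k + l k) % (d k:ℤ) < ((m k + l k) / d k) * d k := by
        nlinarith [hdiv]
      exact_mod_cast h
    · rw [le_div_iff₀ hdQ, hmk]
      have h : ((m k + l k) / d k) * d k ≤ m k - (m k + l k) % (d k:ℤ) + l k := by
        nlinarith [hdiv]
      push_cast
      exact_mod_cast h
  · intro p
    constructor
    · intro h; rw [hmk]; omega
    · intro h; rw [hmk]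
      have hpd : p ≤ (m k + l k) / d k := by
        rw [Int.le_ediv_iff_mul_le hd0]; omega
      nlinarith [mul_le_mul_of_nonneg_right hpd hd0.le]
end

section
/- Let m ∈ ℤ^r be determinantal and let k ∈ {1,…,r} be such that P_k(m) = ∅. Then P_k(m′) ≠ ∅ and P_k(m″) ≠ ∅, and both m′ and m″ are determinantal. -/
open Finset

private lemma mem_Pset_iff' {r : ℕ} (l d : Fin r → ℕ) (m : Fin r → ℤ) (k : Fin r)
    (hd : 0 < d k) (p : ℤ) :
    p ∈ Pset l d m k ↔ m k < p * d k ∧ p * d k ≤ m k + l k := by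
  have hdq : (0:ℚ) < (d k : ℚ) := by exact_mod_cast hd
  simp only [Pset, Set.mem_setOf_eq, div_lt_iff₀ hdq, le_div_iff₀ hdq]
  constructor
  · rintro ⟨h1, h2⟩
    exact ⟨by exact_mod_cast h1, by exact_mod_cast h2⟩
  · rintro ⟨h1, h2⟩
    exact ⟨by exact_mod_cast h1, by exact_mod_cast h2⟩

/-- If `m` is determinantal and `P_k(m) = ∅`, then `P_k(m′) ≠ ∅`, `P_k(m″) ≠ ∅`,
and both `m′` and `m″` are determinantal. -/
theorem mprime_msecond_determinantal (r : ℕ) (hr : 0 < r) (l d : Fin r → ℕ) (hl : ∀ k, 0 < l k) (hd : ∀ k, 0 < d k)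
    (m : Fin r → ℤ) (hdet : Determinantal l d m) (k : Fin r) (hP : Pset l d m k = ∅) :
    (Pset l d (mprime d m k) k).Nonempty ∧
    (Pset l d (msecond l d m k) k).Nonempty ∧
    Determinantal l d (mprime d m k) ∧
    Determinantal l d (msecond l d m k) := by
  obtain ⟨hK1, hK2⟩ := hdet
  have hdk := hd k
  have hdkz : (0:ℤ) < (d k : ℤ) := by exact_mod_cast hdk
  have hlk : (1:ℤ) ≤ (l k : ℤ) := by exact_mod_cast hl k
  set s := (m k + l k) % (d k : ℤ) with hsdef
  set G := (m k + l k) / (d k : ℤ) with hGdef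
  have hs0 : 0 ≤ s := by rw [hsdef]; exact Int.emod_nonneg _ (by omega)
  have hs1 : s < d k := by rw [hsdef]; exact Int.emod_lt_of_pos _ hdkz
  have hG : (d k : ℤ) * G + s = m k + l k := by
    rw [hsdef, hGdef]; exact Int.mul_ediv_add_emod _ _
  have hGd : G * d k = m k + l k - s := by rw [mul_comm]; linarith
  set e := m k % (d k : ℤ) with hedef
  set F := m k / (d k : ℤ) with hFdef
  have he0 : 0 ≤ e := by rw [hedef]; exact Int.emod_nonneg _ (by omega)
  have he1 : e < d k := by rw [hedef]; exact Int.emod_lt_of_pos _ hdkz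
  have hF : (d k : ℤ) * F + e = m k := by
    rw [hedef, hFdef]; exact Int.mul_ediv_add_emod _ _
  -- key consequence of emptiness: l k ≤ s
  have hkey : (l k : ℤ) ≤ s := by
    by_contra hc
    push_neg at hc
    have hmem : G ∈ Pset l d m k := by
      rw [mem_Pset_iff' l d m k hdk]
      constructor <;> linarith
    rw [hP] at hmem
    exact hmem
  have hmk' : mprime d m k k = m k + d k - e - 1 := by
    rw [hedef]; simp [mprime]
  have hmj' : ∀ j, j ≠ k → mprime d m k j = m j := by
    intro j hj; simp [mprime, Function.update_apply, hj]
  have hmk'' : msecond l d m k k = m k - s := by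
    rw [hsdef]; simp [msecond]
  have hmj'' : ∀ j, j ≠ k → msecond l d m k j = m j := by
    intro j hj; simp [msecond, Function.update_apply, hj]
  -- transfer for m′
  have transP : ∀ p : ℤ, ∀ J : Finset (Fin r),
      SummandNonzero l d (mprime d m k) p J → SummandNonzero l d m p J := by
    rintro p J ⟨h1, h2⟩
    constructor
    · intro j hj
      rcases eq_or_ne j k with rfl | hne
      · have h := h1 j hj
        rw [hmk'] at h
        linarith
      · have h := h1 j hj; rwa [hmj' j hne] at h
    · intro j hj
      rcases eq_or_ne j k with rfl | hne
      · have h := h2 j hj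
        rw [hmk'] at h
        have hexp : (d j : ℤ) * (F + 1 - p) = m j + d j - e - p * d j := by
          linear_combination hF
        have h1' : 1 ≤ (d j : ℤ) * (F + 1 - p) := by linarith
        have ht : 1 ≤ F + 1 - p := by
          by_contra hc
          push_neg at hc
          have : (d j : ℤ) * (F + 1 - p) ≤ 0 :=
            mul_nonpos_of_nonneg_of_nonpos hdkz.le (by omega)
          linarith
        have hexp2 : m j - p * d j = (d j : ℤ) * (F - p) + e := by
          linear_combination -hF
        have : 0 ≤ (d j : ℤ) * (F - p) := mul_nonneg hdkz.le (by omega)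
        linarith
      · have h := h2 j hj; rwa [hmj' j hne] at h
  -- transfer for m″
  have transS : ∀ p : ℤ, ∀ J : Finset (Fin r),
      SummandNonzero l d (msecond l d m k) p J → SummandNonzero l d m p J := by
    rintro p J ⟨h1, h2⟩
    constructor
    · intro j hj
      rcases eq_or_ne j k with rfl | hne
      · have h := h1 j hj
        rw [hmk''] at h
        have hexp : (d j : ℤ) * (G - p) = m j - s - p * d j + l j := by
          linear_combination hG
        have hneg : (d j : ℤ) * (G - p) ≤ -1 := by linarith
        have ht : G - p ≤ -1 := by
          by_contra hc
          push_neg at hc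
          have : 0 ≤ (d j : ℤ) * (G - p) := mul_nonneg hdkz.le (by omega)
          linarith
        have : (d j : ℤ) * (G - p) ≤ (d j : ℤ) * (-1) :=
          mul_le_mul_of_nonneg_left ht hdkz.le
        linarith
      · have h := h1 j hj; rwa [hmj'' j hne] at h
    · intro j hj
      rcases eq_or_ne j k with rfl | hne
      · have h := h2 j hj
        rw [hmk''] at h
        linarith
      · have h := h2 j hj; rwa [hmj'' j hne] at h
  refine ⟨⟨F + 1, ?_⟩, ⟨G, ?_⟩, ⟨?_, ?_⟩, ⟨?_, ?_⟩⟩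
  · rw [mem_Pset_iff' l d _ k hdk, hmk']
    have hx : (F + 1) * d k = m k - e + d k := by linear_combination hF
    constructor <;> linarith
  · rw [mem_Pset_iff' l d _ k hdk, hmk'']
    constructor <;> linarith
  · exact fun p hp hp2 J hJ hnz => hK1 p hp hp2 J hJ (transP p J hnz)
  · exact fun p hp hp2 J hJ hnz => hK2 p hp hp2 J hJ (transP p J hnz)
  · exact fun p hp hp2 J hJ hnz => hK1 p hp hp2 J hJ (transS p J hnz)
  · exact fun p hp hp2 J hJ hnz => hK2 p hp hp2 J hJ (transS p J hnz)
end

section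
/- If m ∈ ℤ^r is determinantal and k ∈ {1,…,r} is such that P_k(m) = ∅, then 0 ≤ m_k ≤ d_k·(n+1) − l_k − 1. -/
open Finset

namespace DetAux

variable {r : ℕ}

/-- `t` is in the "middle zone" of coordinate `j`. -/
def mid (l d : Fin r → ℕ) (m : Fin r → ℤ) (j : Fin r) (t : ℤ) : Prop :=
  -(l j : ℤ) ≤ m j - t * d j ∧ m j - t * d j ≤ -1

instance (l d : Fin r → ℕ) (m : Fin r → ℤ) (j : Fin r) (t : ℤ) :
    Decidable (mid l d m j t) := by
  unfold mid; infer_instance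

def Jset (l d : Fin r → ℕ) (m : Fin r → ℤ) (p : ℤ) : Finset (Fin r) :=
  Finset.univ.filter fun j => m j - p * d j < 0

def good (l d : Fin r → ℕ) (m : Fin r → ℤ) (p : ℤ) : Prop :=
  ∀ j, ¬ mid l d m j p

instance (l d : Fin r → ℕ) (m : Fin r → ℤ) (p : ℤ) : Decidable (good l d m p) := by
  unfold good; infer_instance

def nu (l d : Fin r → ℕ) (m : Fin r → ℤ) (p : ℤ) : ℤ :=
  p - ∑ j ∈ Jset l d m p, (l j : ℤ)

lemma mem_Jset (l d : Fin r → ℕ) (m : Fin r → ℤ) {p : ℤ} {j : Fin r} :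
    j ∈ Jset l d m p ↔ m j - p * d j < 0 := by
  simp [Jset]

lemma summand_of_good (l d : Fin r → ℕ) (m : Fin r → ℤ) {p : ℤ}
    (hp : good l d m p) : SummandNonzero l d m p (Jset l d m p) := by
  constructor
  · intro j hj
    have h1 := (mem_Jset l d m).1 hj
    have h2 := hp j
    unfold mid at h2
    omega
  · intro j hj
    have h1 : ¬ (m j - p * d j < 0) := fun h => hj ((mem_Jset l d m).2 h)
    omega

lemma card_mid_le (l d : Fin r → ℕ) (m : Fin r → ℤ) (j : Fin r) (hdj : 0 < d j)
    (T : Finset ℤ) : (T.filter fun t => mid l d m j t).card ≤ l j := by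
  have h : ∀ t ∈ T.filter (fun t => mid l d m j t),
      m j - t * d j + l j ∈ Finset.Ico (0 : ℤ) (l j) := by
    intro t ht
    have h2 := (Finset.mem_filter.1 ht).2
    unfold mid at h2
    simp only [Finset.mem_Ico]
    omega
  have hinj : Set.InjOn (fun t => m j - t * d j + (l j : ℤ))
      (T.filter fun t => mid l d m j t) := by
    intro a _ b _ hab
    simp only at hab
    have hd0 : (d j : ℤ) ≠ 0 := by positivity
    have hab2 : a * (d j : ℤ) = b * d j := by omega
    exact mul_right_cancel₀ hd0 hab2
  have hc := Finset.card_le_card_of_injOn _ h hinj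
  simpa [Int.card_Ico] using hc

lemma count (l d : Fin r → ℕ) (m : Fin r → ℤ) (hd : ∀ j, 0 < d j)
    (S : Finset (Fin r)) (T : Finset ℤ)
    (hcov : ∀ t ∈ T, ∃ j ∈ S, mid l d m j t) :
    (T.card : ℤ) ≤ ∑ j ∈ S, (l j : ℤ) := by
  classical
  have hsub : T ⊆ S.biUnion fun j => T.filter fun t => mid l d m j t := by
    intro t ht
    obtain ⟨j, hjS, hj⟩ := hcov t ht
    exact Finset.mem_biUnion.2 ⟨j, hjS, Finset.mem_filter.2 ⟨ht, hj⟩⟩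
  calc (T.card : ℤ)
      ≤ ((S.biUnion fun j => T.filter fun t => mid l d m j t).card : ℤ) := by
        exact_mod_cast Finset.card_le_card hsub
    _ ≤ ∑ j ∈ S, ((T.filter fun t => mid l d m j t).card : ℤ) := by
        exact_mod_cast Finset.card_biUnion_le
    _ ≤ ∑ j ∈ S, (l j : ℤ) := Finset.sum_le_sum fun j _ => by
        exact_mod_cast card_mid_le l d m j (hd j) T

lemma mem_Jset_of_mid (l d : Fin r → ℕ) (m : Fin r → ℤ) (hd : ∀ j, 0 < d j)
    {j : Fin r} {t q : ℤ} (h : mid l d m j t) (htq : t < q) :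
    j ∈ Jset l d m q := by
  rw [mem_Jset]
  have hD : (1:ℤ) ≤ d j := by exact_mod_cast hd j
  have h1 : t * (d j : ℤ) + d j ≤ q * d j := by
    have h2 := mul_le_mul_of_nonneg_right (by omega : t + 1 ≤ q)
      (by positivity : (0:ℤ) ≤ (d j : ℤ))
    rw [add_mul, one_mul] at h2; exact h2
  unfold mid at h
  omega

lemma notMem_Jset_of_mid (l d : Fin r → ℕ) (m : Fin r → ℤ) (hd : ∀ j, 0 < d j)
    {j : Fin r} {t p : ℤ} (h : mid l d m j t) (hpt : p < t) (hp : good l d m p) :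
    j ∉ Jset l d m p := by
  rw [mem_Jset]
  have hD : (1:ℤ) ≤ d j := by exact_mod_cast hd j
  have h1 : p * (d j : ℤ) + d j ≤ t * d j := by
    have h2 := mul_le_mul_of_nonneg_right (by omega : p + 1 ≤ t)
      (by positivity : (0:ℤ) ≤ (d j : ℤ))
    rw [add_mul, one_mul] at h2; exact h2
  have h3 := hp j
  unfold mid at h h3
  omega

lemma Jset_mono (l d : Fin r → ℕ) (m : Fin r → ℤ) (hd : ∀ j, 0 < d j)
    {p q : ℤ} (hpq : p ≤ q) : Jset l d m p ⊆ Jset l d m q := by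
  intro j hj
  rw [mem_Jset] at hj ⊢
  have h1 : p * (d j : ℤ) ≤ q * d j :=
    mul_le_mul_of_nonneg_right hpq (by positivity)
  omega

lemma step (l d : Fin r → ℕ) (m : Fin r → ℤ) (hd : ∀ j, 0 < d j) {p q : ℤ}
    (hp : good l d m p) (hpq : p < q)
    (hbet : ∀ t, p < t → t < q → ¬ good l d m t) :
    nu l d m q ≤ nu l d m p + 1 := by
  classical
  have hsub := Jset_mono l d m hd (le_of_lt hpq)
  have hcov : ∀ t ∈ Finset.Ioo p q,
      ∃ j ∈ Jset l d m q \ Jset l d m p, mid l d m j t := by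
    intro t ht
    rw [Finset.mem_Ioo] at ht
    have hng := hbet t ht.1 ht.2
    unfold good at hng
    push_neg at hng
    obtain ⟨j, hj⟩ := hng
    refine ⟨j, Finset.mem_sdiff.2 ⟨?_, ?_⟩, hj⟩
    · exact mem_Jset_of_mid l d m hd hj ht.2
    · exact notMem_Jset_of_mid l d m hd hj ht.1 hp
  have hcard := count l d m hd _ _ hcov
  have hIoo : ((Finset.Ioo p q).card : ℤ) = q - p - 1 := by
    rw [Int.card_Ioo]
    omega
  rw [hIoo] at hcard
  have hsum : ∑ j ∈ Jset l d m q \ Jset l d m p, (l j : ℤ)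
      + ∑ j ∈ Jset l d m p, (l j : ℤ) = ∑ j ∈ Jset l d m q, (l j : ℤ) :=
    Finset.sum_sdiff hsub
  unfold nu
  omega

lemma exists_nu_eq (l d : Fin r → ℕ) (m : Fin r → ℤ) (hd : ∀ j, 0 < d j)
    (N v : ℤ) {p0 p1 : ℤ}
    (h0 : good l d m p0) (h1 : good l d m p1) (hp00 : 0 ≤ p0) (hp01 : p0 ≤ p1)
    (hp1N : p1 ≤ N) (hnu0 : nu l d m p0 ≤ v) (hnu1 : v ≤ nu l d m p1) :
    ∃ q, 0 ≤ q ∧ q ≤ N ∧ good l d m q ∧ nu l d m q = v := by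
  classical
  set A := (Finset.Icc (0:ℤ) p1).filter
    (fun x => good l d m x ∧ nu l d m x ≤ v) with hA
  have hp0A : p0 ∈ A := by
    rw [hA, Finset.mem_filter, Finset.mem_Icc]
    exact ⟨⟨hp00, hp01⟩, h0, hnu0⟩
  have hAne : A.Nonempty := ⟨p0, hp0A⟩
  set p := A.max' hAne with hp
  have hpA : p ∈ A := A.max'_mem hAne
  rw [hA, Finset.mem_filter, Finset.mem_Icc] at hpA
  obtain ⟨⟨hp0', hp1'⟩, hpg, hpnu⟩ := hpA
  by_cases hcase : nu l d m p = v
  · exact ⟨p, hp0', le_trans hp1' hp1N, hpg, hcase⟩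
  · exfalso
    have hpp1 : p < p1 := by
      rcases lt_or_eq_of_le hp1' with h | h
      · exact h
      · exfalso; rw [h] at hcase hpnu; omega
    set B := (Finset.Ioc p p1).filter (fun x => good l d m x) with hB
    have hp1B : p1 ∈ B := by
      rw [hB, Finset.mem_filter, Finset.mem_Ioc]
      exact ⟨⟨hpp1, le_refl _⟩, h1⟩
    have hBne : B.Nonempty := ⟨p1, hp1B⟩
    set q := B.min' hBne with hq
    have hqB : q ∈ B := B.min'_mem hBne
    rw [hB, Finset.mem_filter, Finset.mem_Ioc] at hqB
    obtain ⟨⟨hpq, hqp1⟩, hqg⟩ := hqB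
    have hbet : ∀ t, p < t → t < q → ¬ good l d m t := by
      intro t ht1 ht2 htg
      have htB : t ∈ B := by
        rw [hB, Finset.mem_filter, Finset.mem_Ioc]
        exact ⟨⟨ht1, le_trans (le_of_lt ht2) hqp1⟩, htg⟩
      have := B.min'_le t htB
      omega
    have hstep := step l d m hd hpg hpq hbet
    have hqA : q ∈ A := by
      rw [hA, Finset.mem_filter, Finset.mem_Icc]
      exact ⟨⟨by omega, hqp1⟩, hqg, by omega⟩
    have := A.le_max' q hqA
    omega

end DetAux


set_option maxHeartbeats 2000000

/-- If `m` is determinantal and `P_k(m) = ∅`, then `0 ≤ m_k ≤ d_k (n+1) − l_k − 1`. -/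
theorem determinantal_bounds_empty (r : ℕ) (hr : 0 < r) (l d : Fin r → ℕ) (hl : ∀ k, 0 < l k) (hd : ∀ k, 0 < d k)
    (m : Fin r → ℤ) (hdet : Determinantal l d m) (k : Fin r) (hP : Pset l d m k = ∅) :
    0 ≤ m k ∧ m k ≤ (d k : ℤ) * (nDim l + 1) - l k - 1 := by
  classical
  set n : ℕ := ∑ k, l k with hn
  have husum : ∑ j : Fin r, (l j : ℤ) = (n : ℤ) := by
    rw [hn]; push_cast; rfl
  have hN : nDim l = (n : ℤ) := husum
  set N : ℤ := (n : ℤ) + 1 with hNdef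
  have hNN : nDim l + 1 = N := by rw [hN, hNdef]
  have hlk : 0 < l k := hl k
  -- P_k(m) = ∅ means the middle zone of coordinate k is empty
  have hmidk : ∀ t : ℤ, ¬ DetAux.mid l d m k t := by
    intro t ht
    have hdkQ : (0:ℚ) < (d k : ℚ) := by exact_mod_cast hd k
    unfold DetAux.mid at ht
    have h1 : m k < t * d k := by omega
    have h2 : t * (d k : ℤ) ≤ m k + l k := by omega
    have hmem : t ∈ Pset l d m k := by
      simp only [Pset, Set.mem_setOf_eq]
      constructor
      · rw [div_lt_iff₀ hdkQ]; exact_mod_cast h1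
      · rw [le_div_iff₀ hdkQ]; exact_mod_cast h2
    rw [hP] at hmem
    exact hmem
  -- the set of good points in [0, N]
  set V := (Finset.Icc (0:ℤ) N).filter (DetAux.good l d m) with hV
  have hIccN : ((Finset.Icc (0:ℤ) N).card : ℤ) = N + 1 := by
    rw [Int.card_Icc]; omega
  have hbad : (((Finset.Icc (0:ℤ) N).filter (fun t => ¬ DetAux.good l d m t)).card : ℤ)
      ≤ ∑ j ∈ Finset.univ.erase k, (l j : ℤ) := by
    apply DetAux.count l d m hd
    intro t ht
    have h2 := (Finset.mem_filter.1 ht).2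
    unfold DetAux.good at h2
    push_neg at h2
    obtain ⟨j, hj⟩ := h2
    refine ⟨j, Finset.mem_erase.2 ⟨fun h => hmidk t (h ▸ hj), Finset.mem_univ j⟩, hj⟩
  have hsumerase : ∑ j ∈ Finset.univ.erase k, (l j : ℤ) + (l k : ℤ) = (n : ℤ) := by
    rw [Finset.sum_erase_add _ _ (Finset.mem_univ k)]; exact husum
  have hVne : V.Nonempty := by
    rw [hV, ← Finset.card_pos]
    have hsplit := Finset.card_filter_add_card_filter_not
      (s := Finset.Icc (0:ℤ) N) (p := DetAux.good l d m)
    omega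
  set p0 := V.min' hVne with hp0def
  set p1 := V.max' hVne with hp1def
  have hp0V : p0 ∈ V := V.min'_mem hVne
  have hp1V : p1 ∈ V := V.max'_mem hVne
  rw [hV, Finset.mem_filter, Finset.mem_Icc] at hp0V hp1V
  obtain ⟨⟨hp00, hp0N⟩, hp0g⟩ := hp0V
  obtain ⟨⟨hp10, hp1N⟩, hp1g⟩ := hp1V
  have hp01 : p0 ≤ p1 := V.min'_le p1 (V.max'_mem hVne)
  have hnotgood_lo : ∀ t : ℤ, 0 ≤ t → t < p0 → ¬ DetAux.good l d m t := by
    intro t h1 h2 hg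
    have htV : t ∈ V := by
      rw [hV, Finset.mem_filter, Finset.mem_Icc]
      exact ⟨⟨h1, by omega⟩, hg⟩
    have := V.min'_le t htV
    omega
  have hnotgood_hi : ∀ t : ℤ, p1 < t → t ≤ N → ¬ DetAux.good l d m t := by
    intro t h1 h2 hg
    have htV : t ∈ V := by
      rw [hV, Finset.mem_filter, Finset.mem_Icc]
      exact ⟨⟨by omega, h2⟩, hg⟩
    have := V.le_max' t htV
    omega
  -- counting below p0
  have hc1 : ((Finset.Ico (0:ℤ) p0).card : ℤ)
      ≤ ∑ j ∈ (DetAux.Jset l d m p0).erase k, (l j : ℤ) := by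
    apply DetAux.count l d m hd
    intro t ht
    rw [Finset.mem_Ico] at ht
    have hng := hnotgood_lo t ht.1 ht.2
    unfold DetAux.good at hng
    push_neg at hng
    obtain ⟨j, hj⟩ := hng
    refine ⟨j, Finset.mem_erase.2 ⟨fun h => hmidk t (h ▸ hj), ?_⟩, hj⟩
    exact DetAux.mem_Jset_of_mid l d m hd hj ht.2
  have hcardIco : ((Finset.Ico (0:ℤ) p0).card : ℤ) = p0 := by
    rw [Int.card_Ico]; omega
  -- counting above p1
  have hc2 : ((Finset.Ioc p1 N).card : ℤ)
      ≤ ∑ j ∈ ((DetAux.Jset l d m p1)ᶜ).erase k, (l j : ℤ) := by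
    apply DetAux.count l d m hd
    intro t ht
    rw [Finset.mem_Ioc] at ht
    have hng := hnotgood_hi t ht.1 ht.2
    unfold DetAux.good at hng
    push_neg at hng
    obtain ⟨j, hj⟩ := hng
    refine ⟨j, Finset.mem_erase.2 ⟨fun h => hmidk t (h ▸ hj), ?_⟩, hj⟩
    exact Finset.mem_compl.2 (DetAux.notMem_Jset_of_mid l d m hd hj ht.1 hp1g)
  have hcardIoc : ((Finset.Ioc p1 N).card : ℤ) = N - p1 := by
    rw [Int.card_Ioc]; omega
  have hcompl : ∑ j ∈ (DetAux.Jset l d m p1)ᶜ, (l j : ℤ)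
      + ∑ j ∈ DetAux.Jset l d m p1, (l j : ℤ) = (n : ℤ) := by
    rw [Finset.sum_compl_add_sum]; exact husum
  have hnu0eq : DetAux.nu l d m p0 = p0 - ∑ j ∈ DetAux.Jset l d m p0, (l j : ℤ) := rfl
  have hnu1eq : DetAux.nu l d m p1 = p1 - ∑ j ∈ DetAux.Jset l d m p1, (l j : ℤ) := rfl
  have herase0 : ∑ j ∈ (DetAux.Jset l d m p0).erase k, (l j : ℤ)
      ≤ ∑ j ∈ DetAux.Jset l d m p0, (l j : ℤ) :=
    Finset.sum_le_sum_of_subset_of_nonneg (Finset.erase_subset _ _)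
      (fun i _ _ => by positivity)
  have herase1 : ∑ j ∈ ((DetAux.Jset l d m p1)ᶜ).erase k, (l j : ℤ)
      ≤ ∑ j ∈ (DetAux.Jset l d m p1)ᶜ, (l j : ℤ) :=
    Finset.sum_le_sum_of_subset_of_nonneg (Finset.erase_subset _ _)
      (fun i _ _ => by positivity)
  constructor
  · -- lower bound
    by_contra hcon
    push_neg at hcon
    have hmk : m k ≤ -(l k : ℤ) - 1 := by
      have h0 := hmidk 0
      unfold DetAux.mid at h0
      omega
    have hkJ0 : k ∈ DetAux.Jset l d m p0 := by
      rw [DetAux.mem_Jset]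
      have hmul : 0 ≤ p0 * (d k : ℤ) := mul_nonneg hp00 (by positivity)
      omega
    have hsum0 : ∑ j ∈ (DetAux.Jset l d m p0).erase k, (l j : ℤ) + (l k : ℤ)
        = ∑ j ∈ DetAux.Jset l d m p0, (l j : ℤ) :=
      Finset.sum_erase_add _ _ hkJ0
    have hlkz : (1:ℤ) ≤ (l k : ℤ) := by exact_mod_cast hlk
    set E1 := ∑ j ∈ (DetAux.Jset l d m p0).erase k, (l j : ℤ) with hE1
    set S0 := ∑ j ∈ DetAux.Jset l d m p0, (l j : ℤ) with hS0
    set E2 := ∑ j ∈ ((DetAux.Jset l d m p1)ᶜ).erase k, (l j : ℤ) with hE2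
    set C1 := ∑ j ∈ (DetAux.Jset l d m p1)ᶜ, (l j : ℤ) with hC1
    set S1 := ∑ j ∈ DetAux.Jset l d m p1, (l j : ℤ) with hS1
    have hnu0 : DetAux.nu l d m p0 ≤ -1 := by
      rw [hnu0eq]; omega
    have hnu1 : (-1 : ℤ) ≤ DetAux.nu l d m p1 := by
      rw [hnu1eq]; omega
    obtain ⟨q, hq0, hqN, hqg, hqnu⟩ :=
      DetAux.exists_nu_eq l d m hd N (-1) hp0g hp1g hp00 hp01 hp1N hnu0 hnu1
    exact hdet.1 q hq0 (by rw [hNN]; exact hqN) (DetAux.Jset l d m q) hqnu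
      (DetAux.summand_of_good l d m hqg)
  · -- upper bound
    by_contra hcon
    push_neg at hcon
    rw [hNN] at hcon
    have hcomm : N * (d k : ℤ) = (d k : ℤ) * N := mul_comm _ _
    have hNk : 0 ≤ m k - N * d k := by
      have h1 := hmidk N
      unfold DetAux.mid at h1
      omega
    have hkJ1 : k ∉ DetAux.Jset l d m p1 := by
      rw [DetAux.mem_Jset]
      have h1 : p1 * (d k : ℤ) ≤ N * d k :=
        mul_le_mul_of_nonneg_right hp1N (by positivity)
      omega
    have hsum1 : ∑ j ∈ ((DetAux.Jset l d m p1)ᶜ).erase k, (l j : ℤ) + (l k : ℤ)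
        = ∑ j ∈ (DetAux.Jset l d m p1)ᶜ, (l j : ℤ) :=
      Finset.sum_erase_add _ _ (Finset.mem_compl.2 hkJ1)
    have hlkz : (1:ℤ) ≤ (l k : ℤ) := by exact_mod_cast hlk
    set E1 := ∑ j ∈ (DetAux.Jset l d m p0).erase k, (l j : ℤ) with hE1
    set S0 := ∑ j ∈ DetAux.Jset l d m p0, (l j : ℤ) with hS0
    set E2 := ∑ j ∈ ((DetAux.Jset l d m p1)ᶜ).erase k, (l j : ℤ) with hE2
    set C1 := ∑ j ∈ (DetAux.Jset l d m p1)ᶜ, (l j : ℤ) with hC1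
    set S1 := ∑ j ∈ DetAux.Jset l d m p1, (l j : ℤ) with hS1
    have hnu0 : DetAux.nu l d m p0 ≤ 2 := by
      rw [hnu0eq]; omega
    have hnu1 : (2 : ℤ) ≤ DetAux.nu l d m p1 := by
      rw [hnu1eq]; omega
    obtain ⟨q, hq0, hqN, hqg, hqnu⟩ :=
      DetAux.exists_nu_eq l d m hd N 2 hp0g hp1g hp00 hp01 hp1N hnu0 hnu1
    exact hdet.2 q hq0 (by rw [hNN]; exact hqN) (DetAux.Jset l d m q) hqnu
      (DetAux.summand_of_good l d m hqg)
end

section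
/- If m ∈ ℤ^r is determinantal, then for every k ∈ {1,…,r} one has max{−d_k, −l_k} ≤ m_k ≤ d_k·(n+1) − 1 + min{d_k − l_k, 0}. -/
open Finset

namespace DetBounds

open scoped Classical

variable {r : ℕ} (l d : Fin r → ℕ) (m : Fin r → ℤ)

noncomputable def Jset (p : ℤ) : Finset (Fin r) :=
  Finset.univ.filter (fun j => m j - p * d j ≤ -(l j : ℤ) - 1)

def Adm (p : ℤ) : Prop :=
  ∀ j, 0 ≤ m j - p * (d j : ℤ) ∨ m j - p * d j ≤ -(l j : ℤ) - 1

noncomputable def nuf (p : ℤ) : ℤ := p - ∑ j ∈ Jset l d m p, (l j : ℤ)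

lemma mem_Jset {p : ℤ} {j : Fin r} :
    j ∈ Jset l d m p ↔ m j - p * d j ≤ -(l j : ℤ) - 1 := by
  simp [Jset]

lemma summand_of_adm {p : ℤ} (h : Adm l d m p) :
    SummandNonzero l d m p (Jset l d m p) := by
  refine ⟨fun k hk => (mem_Jset l d m).1 hk, fun k hk => ?_⟩
  rcases h k with h0 | h1
  · exact h0
  · exact absurd ((mem_Jset l d m).2 h1) hk

lemma Jset_mono {p q : ℤ} (hpq : p ≤ q) : Jset l d m p ⊆ Jset l d m q := by
  intro j hj
  rw [mem_Jset] at hj ⊢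
  have : p * (d j : ℤ) ≤ q * d j :=
    mul_le_mul_of_nonneg_right hpq (by positivity)
  omega

lemma card_le_of_window {S : Finset ℤ} {c : ℕ}
    (h : ∀ x ∈ S, ∀ y ∈ S, y ≤ x + c) : S.card ≤ c + 1 := by
  rcases S.eq_empty_or_nonempty with rfl | hS
  · simp
  · have hsub : S ⊆ Finset.Icc (S.min' hS) (S.min' hS + c) := by
      intro y hy
      simp only [Finset.mem_Icc]
      exact ⟨S.min'_le y hy, h _ (S.min'_mem hS) y hy⟩
    have := Finset.card_le_card hsub
    rwa [Int.card_Icc, show (S.min' hS + c + 1 - S.min' hS) = ((c : ℤ) + 1) by ring,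
      show ((c : ℤ) + 1).toNat = c + 1 by omega] at this

lemma gap_card_le (hd : ∀ k, 0 < d k) (hl : ∀ k, 0 < l k) (j : Fin r)
    (s : Finset ℤ) (hs : ∀ t ∈ s, m j + 1 ≤ t * d j ∧ t * d j ≤ m j + l j) :
    s.card ≤ l j := by
  have h1 : 0 < l j := hl j
  have h2 : (1 : ℤ) ≤ d j := by exact_mod_cast hd j
  have := card_le_of_window (S := s) (c := l j - 1) ?_
  · omega
  · intro x hx y hy
    obtain ⟨hx1, hx2⟩ := hs x hx
    obtain ⟨hy1, hy2⟩ := hs y hy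
    have hcast : ((l j - 1 : ℕ) : ℤ) = (l j : ℤ) - 1 := by
      rw [Nat.cast_sub (by omega : 1 ≤ l j)]; norm_num
    rw [hcast]
    rcases le_or_gt y x with hxy | hxy
    · omega
    · have h3 : (y - x) * d j ≤ (l j : ℤ) - 1 := by
        have : y * d j - x * d j ≤ (m j + l j) - (m j + 1) := by omega
        nlinarith
      have h4 : (y - x) ≤ (y - x) * d j := by nlinarith
      omega

/-- Covering count: if every integer in `[a,b)` lies in the "gap" of some `j ∈ T`,
then `b - a` is at most the sum of per-`j` bounds `c j` on gap cards. -/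
lemma cover_le (a b : ℤ) (T : Finset (Fin r)) (c : Fin r → ℤ)
    (hc : ∀ j ∈ T,
      (((Finset.Ico a b).filter
        (fun t => m j + 1 ≤ t * d j ∧ t * d j ≤ m j + (l j : ℤ))).card : ℤ) ≤ c j)
    (hcov : ∀ t, a ≤ t → t < b →
      ∃ j ∈ T, m j + 1 ≤ t * d j ∧ t * d j ≤ m j + (l j : ℤ)) :
    b - a ≤ ∑ j ∈ T, c j := by
  have hsub : Finset.Ico a b ⊆ T.biUnion (fun j => (Finset.Ico a b).filter
      (fun t => m j + 1 ≤ t * d j ∧ t * d j ≤ m j + (l j : ℤ))) := by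
    intro t ht
    rw [Finset.mem_Ico] at ht
    obtain ⟨j, hj, hgap⟩ := hcov t ht.1 ht.2
    exact Finset.mem_biUnion.2 ⟨j, hj, Finset.mem_filter.2 ⟨Finset.mem_Ico.2 ht, hgap⟩⟩
  have h1 : (Finset.Ico a b).card ≤ ∑ j ∈ T, ((Finset.Ico a b).filter
      (fun t => m j + 1 ≤ t * d j ∧ t * d j ≤ m j + (l j : ℤ))).card :=
    le_trans (Finset.card_le_card hsub) (Finset.card_biUnion_le)
  have h2 : ((Finset.Ico a b).card : ℤ) ≤ ∑ j ∈ T, c j := by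
    calc ((Finset.Ico a b).card : ℤ)
        ≤ ∑ j ∈ T, (((Finset.Ico a b).filter
            (fun t => m j + 1 ≤ t * d j ∧ t * d j ≤ m j + (l j : ℤ))).card : ℤ) := by
          exact_mod_cast h1
      _ ≤ ∑ j ∈ T, c j := Finset.sum_le_sum hc
  have h3 : ((Finset.Ico a b).card : ℤ) = max (b - a) 0 := by
    rw [Int.card_Ico]; omega
  omega

/-- If `t` is not admissible, it lies in the gap of some `j`. -/
lemma gap_of_not_adm {t : ℤ} (h : ¬ Adm l d m t) :
    ∃ j, m j + 1 ≤ t * d j ∧ t * d j ≤ m j + (l j : ℤ) := by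
  rw [Adm] at h
  push_neg at h
  obtain ⟨j, h1, h2⟩ := h
  exact ⟨j, by omega, by omega⟩

/-- A gap point strictly below an admissible `p'` forces `j ∈ Jset p'`. -/
lemma gap_mem_Jset (hd : ∀ k, 0 < d k) {t p' : ℤ} (hadm : Adm l d m p')
    (htp : t < p') {j : Fin r} (hg1 : m j + 1 ≤ t * d j) :
    j ∈ Jset l d m p' := by
  rw [mem_Jset]
  rcases hadm j with h0 | h1
  · exfalso
    have hdj : (1 : ℤ) ≤ d j := by exact_mod_cast hd j
    have : (t + 1) * (d j : ℤ) ≤ p' * d j :=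
      mul_le_mul_of_nonneg_right (by omega) (by positivity)
    nlinarith
  · exact h1

/-- A gap point strictly above an admissible `p` forces `j ∉ Jset p`. -/
lemma gap_notMem_Jset (hd : ∀ k, 0 < d k) {t p : ℤ} (hadm : Adm l d m p)
    (htp : p < t) {j : Fin r} (hg2 : t * d j ≤ m j + (l j : ℤ)) :
    j ∉ Jset l d m p := by
  rw [mem_Jset]
  have hdj : (1 : ℤ) ≤ d j := by exact_mod_cast hd j
  have : (p + 1) * (d j : ℤ) ≤ t * d j :=
    mul_le_mul_of_nonneg_right (by omega) (by positivity)
  nlinarith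

lemma step (hd : ∀ k, 0 < d k) (hl : ∀ k, 0 < l k) {p1 p' : ℤ}
    (h1 : Adm l d m p1) (h2 : Adm l d m p') (hlt : p1 < p') :
    ∃ p, p1 ≤ p ∧ p < p' ∧ Adm l d m p ∧ nuf l d m p' ≤ nuf l d m p + 1 := by
  set A := (Finset.Ico p1 p').filter (fun t => Adm l d m t) with hA
  have hne : A.Nonempty := ⟨p1, by simp [hA, hlt, h1]⟩
  obtain ⟨p, hpmem, hple⟩ : ∃ p ∈ A, ∀ t ∈ A, t ≤ p :=
    ⟨A.max' hne, A.max'_mem hne, fun t ht => A.le_max' t ht⟩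
  rw [hA, Finset.mem_filter, Finset.mem_Ico] at hpmem
  obtain ⟨⟨hp1, hp2⟩, hpadm⟩ := hpmem
  refine ⟨p, hp1, hp2, hpadm, ?_⟩
  -- covering (p, p') by gaps of Jset p' \ Jset p
  have hcov : ∀ t, p + 1 ≤ t → t < p' →
      ∃ j ∈ Jset l d m p' \ Jset l d m p,
        m j + 1 ≤ t * d j ∧ t * d j ≤ m j + (l j : ℤ) := by
    intro t ht1 ht2
    have hnadm : ¬ Adm l d m t := by
      intro hadm
      have : t ∈ A := by
        rw [hA, Finset.mem_filter, Finset.mem_Ico]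
        exact ⟨⟨by omega, ht2⟩, hadm⟩
      have := hple t this
      omega
    obtain ⟨j, hg1, hg2⟩ := gap_of_not_adm l d m hnadm
    refine ⟨j, ?_, hg1, hg2⟩
    rw [Finset.mem_sdiff]
    exact ⟨gap_mem_Jset l d m hd h2 ht2 hg1,
      gap_notMem_Jset l d m hd hpadm (by omega) hg2⟩
  have hcard : p' - (p + 1) ≤ ∑ j ∈ Jset l d m p' \ Jset l d m p, (l j : ℤ) := by
    refine cover_le l d m (p + 1) p' _ (fun j => (l j : ℤ)) ?_ hcov
    intro j hj
    beta_reduce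
    exact_mod_cast gap_card_le l d m hd hl j _ (fun t ht => (Finset.mem_filter.1 ht).2)
  have hmono := Jset_mono l d m (show p ≤ p' by omega)
  have hsplit : ∑ j ∈ Jset l d m p' \ Jset l d m p, (l j : ℤ)
      + ∑ j ∈ Jset l d m p, (l j : ℤ) = ∑ j ∈ Jset l d m p', (l j : ℤ) :=
    Finset.sum_sdiff hmono
  simp only [nuf]
  omega

lemma ivt_s8 (c : ℤ) (hd : ∀ k, 0 < d k) (hl : ∀ k, 0 < l k) :
    ∀ N : ℕ, ∀ p1 p2 : ℤ, p2 - p1 = N → Adm l d m p1 → Adm l d m p2 →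
      nuf l d m p1 ≤ c → c ≤ nuf l d m p2 →
      ∃ p, p1 ≤ p ∧ p ≤ p2 ∧ Adm l d m p ∧ nuf l d m p = c := by
  intro N
  induction N using Nat.strong_induction_on with
  | _ N ih =>
    intro p1 p2 hN h1 h2 hc1 hc2
    by_cases hc : nuf l d m p2 = c
    · exact ⟨p2, by omega, le_refl _, h2, hc⟩
    · have hcc : c + 1 ≤ nuf l d m p2 := by omega
      have hle : p1 ≤ p2 := by omega
      have hlt : p1 < p2 := by
        rcases eq_or_lt_of_le hle with rfl | h
        · omega
        · exact h
      obtain ⟨p, hpl, hpr, hpadm, hstep⟩ := step l d m hd hl h1 h2 hlt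
      obtain ⟨q, hq1, hq2, hq3, hq4⟩ := ih (p - p1).toNat (by omega) p1 p
        (by omega) h1 hpadm hc1 (by omega)
      exact ⟨q, hq1, by omega, hq3, hq4⟩

lemma exists_adm (hd : ∀ k, 0 < d k) (hl : ∀ k, 0 < l k) :
    ∃ p, 0 ≤ p ∧ p ≤ nDim l + 1 ∧ Adm l d m p := by
  by_contra h
  push_neg at h
  have hcov : ∀ t, (0 : ℤ) ≤ t → t < nDim l + 2 →
      ∃ j ∈ (Finset.univ : Finset (Fin r)),
        m j + 1 ≤ t * d j ∧ t * d j ≤ m j + (l j : ℤ) := by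
    intro t ht1 ht2
    obtain ⟨j, hg⟩ := gap_of_not_adm l d m (h t ht1 (by omega))
    exact ⟨j, Finset.mem_univ j, hg⟩
  have hle := cover_le l d m 0 (nDim l + 2) Finset.univ (fun j => (l j : ℤ))
    (fun j _ => by
      beta_reduce
      exact_mod_cast gap_card_le l d m hd hl j _ (fun t ht => (Finset.mem_filter.1 ht).2))
    hcov
  beta_reduce at hle
  have hsum : ∑ j ∈ (Finset.univ : Finset (Fin r)), (l j : ℤ) = nDim l := rfl
  omega

lemma nu_min_le (hd : ∀ k, 0 < d k) (hl : ∀ k, 0 < l k) {p1 : ℤ} (h0 : 0 ≤ p1)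
    (hadm : Adm l d m p1) (hmin : ∀ t, 0 ≤ t → t < p1 → ¬ Adm l d m t) :
    nuf l d m p1 ≤ 0 := by
  have hcov : ∀ t, (0 : ℤ) ≤ t → t < p1 →
      ∃ j ∈ Jset l d m p1, m j + 1 ≤ t * d j ∧ t * d j ≤ m j + (l j : ℤ) := by
    intro t ht1 ht2
    obtain ⟨j, hg1, hg2⟩ := gap_of_not_adm l d m (hmin t ht1 ht2)
    exact ⟨j, gap_mem_Jset l d m hd hadm ht2 hg1, hg1, hg2⟩
  have hle := cover_le l d m 0 p1 (Jset l d m p1) (fun j => (l j : ℤ))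
    (fun j _ => by
      beta_reduce
      exact_mod_cast gap_card_le l d m hd hl j _ (fun t ht => (Finset.mem_filter.1 ht).2))
    hcov
  beta_reduce at hle
  simp only [nuf]
  omega

lemma nu_min_le_neg (hd : ∀ k, 0 < d k) (hl : ∀ k, 0 < l k) {p1 : ℤ} (h0 : 0 ≤ p1)
    (hadm : Adm l d m p1) (hmin : ∀ t, 0 ≤ t → t < p1 → ¬ Adm l d m t) (k : Fin r)
    (hk : m k ≤ -(d k : ℤ) - 1 ∨ m k ≤ -(l k : ℤ) - 1) :
    nuf l d m p1 ≤ -1 := by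
  have hdk : (1 : ℤ) ≤ d k := by exact_mod_cast hd k
  have hlk : (1 : ℤ) ≤ l k := by exact_mod_cast hl k
  have hkJ : k ∈ Jset l d m p1 := by
    rw [mem_Jset]
    rcases hadm k with hc | hc
    · exfalso
      have h1 : 0 ≤ p1 * (d k : ℤ) := by positivity
      omega
    · exact hc
  have hck : (((Finset.Ico (0 : ℤ) p1).filter
      (fun t => m k + 1 ≤ t * d k ∧ t * d k ≤ m k + (l k : ℤ))).card : ℤ)
        ≤ (l k : ℤ) - 1 := by
    rcases le_or_gt (m k + (l k : ℤ)) (-1) with hneg | hpos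
    · have hemp : ((Finset.Ico (0 : ℤ) p1).filter
          (fun t => m k + 1 ≤ t * d k ∧ t * d k ≤ m k + (l k : ℤ))) = ∅ := by
        refine Finset.eq_empty_of_forall_notMem (fun t ht => ?_)
        rw [Finset.mem_filter, Finset.mem_Ico] at ht
        obtain ⟨⟨ht0, _⟩, _, hg2⟩ := ht
        have : 0 ≤ t * (d k : ℤ) := by positivity
        omega
      rw [hemp]
      simp
      omega
    · have hka : m k ≤ -(d k : ℤ) - 1 := by
        rcases hk with h | h
        · exact h
        · omega
      have hsub : ((Finset.Ico (0 : ℤ) p1).filter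
          (fun t => m k + 1 ≤ t * d k ∧ t * d k ≤ m k + (l k : ℤ)))
            ⊆ Finset.Ico (0 : ℤ) ((l k : ℤ) - 1) := by
        intro t ht
        rw [Finset.mem_filter, Finset.mem_Ico] at ht
        obtain ⟨⟨ht0, _⟩, _, hg2⟩ := ht
        rw [Finset.mem_Ico]
        refine ⟨ht0, ?_⟩
        have h1 : (t + 1) * (d k : ℤ) ≤ (l k : ℤ) - 1 := by nlinarith
        have h2 : t + 1 ≤ (t + 1) * (d k : ℤ) := by nlinarith
        omega
      have := Finset.card_le_card hsub
      have hcard : ((Finset.Ico (0 : ℤ) ((l k : ℤ) - 1)).card : ℤ) = (l k : ℤ) - 1 := by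
        rw [Int.card_Ico]
        omega
      omega
  have hcov : ∀ t, (0 : ℤ) ≤ t → t < p1 →
      ∃ j ∈ Jset l d m p1, m j + 1 ≤ t * d j ∧ t * d j ≤ m j + (l j : ℤ) := by
    intro t ht1 ht2
    obtain ⟨j, hg1, hg2⟩ := gap_of_not_adm l d m (hmin t ht1 ht2)
    exact ⟨j, gap_mem_Jset l d m hd hadm ht2 hg1, hg1, hg2⟩
  have hle := cover_le l d m 0 p1 (Jset l d m p1)
    (fun j => if j = k then (l k : ℤ) - 1 else (l j : ℤ))
    (fun j _ => by
      beta_reduce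
      by_cases hjk : j = k
      · subst hjk
        simpa using hck
      · simp only [hjk, if_false]
        exact_mod_cast gap_card_le l d m hd hl j _ (fun t ht => (Finset.mem_filter.1 ht).2))
    hcov
  beta_reduce at hle
  have hsum : ∑ j ∈ Jset l d m p1, (if j = k then (l k : ℤ) - 1 else (l j : ℤ))
      = (∑ j ∈ Jset l d m p1, (l j : ℤ)) - 1 := by
    rw [← Finset.add_sum_erase _ _ hkJ, ← Finset.add_sum_erase _ (fun j => (l j : ℤ)) hkJ]
    have heq : ∑ j ∈ (Jset l d m p1).erase k, (if j = k then (l k : ℤ) - 1 else (l j : ℤ))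
        = ∑ j ∈ (Jset l d m p1).erase k, (l j : ℤ) :=
      Finset.sum_congr rfl (fun j hj => by simp [Finset.ne_of_mem_erase hj])
    rw [heq]
    simp
    ring
  simp only [nuf]
  omega

lemma nu_max_ge (hd : ∀ k, 0 < d k) (hl : ∀ k, 0 < l k) {p2 : ℤ}
    (h2 : p2 ≤ nDim l + 1) (hadm : Adm l d m p2)
    (hmax : ∀ t, t ≤ nDim l + 1 → p2 < t → ¬ Adm l d m t) :
    1 ≤ nuf l d m p2 := by
  have hcov : ∀ t, p2 + 1 ≤ t → t < nDim l + 2 →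
      ∃ j ∈ (Jset l d m p2)ᶜ, m j + 1 ≤ t * d j ∧ t * d j ≤ m j + (l j : ℤ) := by
    intro t ht1 ht2
    obtain ⟨j, hg1, hg2⟩ := gap_of_not_adm l d m (hmax t (by omega) (by omega))
    exact ⟨j, Finset.mem_compl.2 (gap_notMem_Jset l d m hd hadm (by omega) hg2), hg1, hg2⟩
  have hle := cover_le l d m (p2 + 1) (nDim l + 2) (Jset l d m p2)ᶜ (fun j => (l j : ℤ))
    (fun j _ => by
      beta_reduce
      exact_mod_cast gap_card_le l d m hd hl j _ (fun t ht => (Finset.mem_filter.1 ht).2))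
    hcov
  beta_reduce at hle
  have hsplit : ∑ j ∈ Jset l d m p2, (l j : ℤ) + ∑ j ∈ (Jset l d m p2)ᶜ, (l j : ℤ)
      = nDim l := Finset.sum_add_sum_compl _ _
  simp only [nuf]
  omega

lemma nu_max_ge_two (hd : ∀ k, 0 < d k) (hl : ∀ k, 0 < l k) {p2 : ℤ}
    (h2 : p2 ≤ nDim l + 1) (hadm : Adm l d m p2)
    (hmax : ∀ t, t ≤ nDim l + 1 → p2 < t → ¬ Adm l d m t) (k : Fin r)
    (hk : (nDim l + 1) * d k ≤ m k ∨
      ((nDim l + 2) * d k - l k ≤ m k ∧ m k ≤ (nDim l + 1) * d k - 1)) :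
    2 ≤ nuf l d m p2 := by
  have hdk : (1 : ℤ) ≤ d k := by exact_mod_cast hd k
  have hlk : (1 : ℤ) ≤ l k := by exact_mod_cast hl k
  have hmul : p2 * (d k : ℤ) ≤ (nDim l + 1) * d k :=
    mul_le_mul_of_nonneg_right h2 (by positivity)
  have hmul2 : (nDim l + 2) * (d k : ℤ) = (nDim l + 1) * d k + d k := by ring
  have hkJ : k ∉ Jset l d m p2 := by
    rw [mem_Jset]
    rcases hk with hka | ⟨hkb1, hkb2⟩
    · omega
    · omega
  have hck : (((Finset.Ico (p2 + 1) (nDim l + 2)).filter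
      (fun t => m k + 1 ≤ t * d k ∧ t * d k ≤ m k + (l k : ℤ))).card : ℤ)
        ≤ (l k : ℤ) - 1 := by
    rcases hk with hka | ⟨hkb1, hkb2⟩
    · have hemp : ((Finset.Ico (p2 + 1) (nDim l + 2)).filter
          (fun t => m k + 1 ≤ t * d k ∧ t * d k ≤ m k + (l k : ℤ))) = ∅ := by
        refine Finset.eq_empty_of_forall_notMem (fun t ht => ?_)
        rw [Finset.mem_filter, Finset.mem_Ico] at ht
        obtain ⟨⟨_, ht2⟩, hg1, _⟩ := ht
        have : t * (d k : ℤ) ≤ (nDim l + 1) * d k :=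
          mul_le_mul_of_nonneg_right (by omega) (by positivity)
        omega
      rw [hemp]
      simp
      omega
    · have hsub : ((Finset.Ico (p2 + 1) (nDim l + 2)).filter
          (fun t => m k + 1 ≤ t * d k ∧ t * d k ≤ m k + (l k : ℤ)))
            ⊆ Finset.Ico (nDim l + 3 - (l k : ℤ)) (nDim l + 2) := by
        intro t ht
        rw [Finset.mem_filter, Finset.mem_Ico] at ht
        obtain ⟨⟨_, ht2⟩, hg1, _⟩ := ht
        rw [Finset.mem_Ico]
        refine ⟨?_, ht2⟩
        have h1 : (nDim l + 2 - t) * (d k : ℤ) ≤ (l k : ℤ) - 1 := by nlinarith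
        have h2 : nDim l + 2 - t ≤ (nDim l + 2 - t) * (d k : ℤ) := by nlinarith
        omega
      have := Finset.card_le_card hsub
      have hcard : ((Finset.Ico (nDim l + 3 - (l k : ℤ)) (nDim l + 2)).card : ℤ)
          = (l k : ℤ) - 1 := by
        rw [Int.card_Ico]
        omega
      omega
  have hcov : ∀ t, p2 + 1 ≤ t → t < nDim l + 2 →
      ∃ j ∈ (Jset l d m p2)ᶜ, m j + 1 ≤ t * d j ∧ t * d j ≤ m j + (l j : ℤ) := by
    intro t ht1 ht2
    obtain ⟨j, hg1, hg2⟩ := gap_of_not_adm l d m (hmax t (by omega) (by omega))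
    exact ⟨j, Finset.mem_compl.2 (gap_notMem_Jset l d m hd hadm (by omega) hg2), hg1, hg2⟩
  have hkC : k ∈ (Jset l d m p2)ᶜ := Finset.mem_compl.2 hkJ
  have hle := cover_le l d m (p2 + 1) (nDim l + 2) (Jset l d m p2)ᶜ
    (fun j => if j = k then (l k : ℤ) - 1 else (l j : ℤ))
    (fun j _ => by
      beta_reduce
      by_cases hjk : j = k
      · subst hjk
        simpa using hck
      · simp only [hjk, if_false]
        exact_mod_cast gap_card_le l d m hd hl j _ (fun t ht => (Finset.mem_filter.1 ht).2))
    hcov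
  beta_reduce at hle
  have hsum : ∑ j ∈ (Jset l d m p2)ᶜ, (if j = k then (l k : ℤ) - 1 else (l j : ℤ))
      = (∑ j ∈ (Jset l d m p2)ᶜ, (l j : ℤ)) - 1 := by
    rw [← Finset.add_sum_erase _ _ hkC, ← Finset.add_sum_erase _ (fun j => (l j : ℤ)) hkC]
    have heq : ∑ j ∈ ((Jset l d m p2)ᶜ).erase k, (if j = k then (l k : ℤ) - 1 else (l j : ℤ))
        = ∑ j ∈ ((Jset l d m p2)ᶜ).erase k, (l j : ℤ) :=
      Finset.sum_congr rfl (fun j hj => by simp [Finset.ne_of_mem_erase hj])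
    rw [heq]
    simp
    ring
  have hsplit : ∑ j ∈ Jset l d m p2, (l j : ℤ) + ∑ j ∈ (Jset l d m p2)ᶜ, (l j : ℤ)
      = nDim l := Finset.sum_add_sum_compl _ _
  simp only [nuf]
  omega

end DetBounds

/-- If `m` is determinantal, then for every `k`,
`max(−d_k, −l_k) ≤ m_k ≤ d_k (n+1) − 1 + min(d_k − l_k, 0)`. -/
theorem determinantal_bounds (r : ℕ) (hr : 0 < r) (l d : Fin r → ℕ) (hl : ∀ k, 0 < l k) (hd : ∀ k, 0 < d k)
    (m : Fin r → ℤ) (hdet : Determinantal l d m) (k : Fin r) :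
    max (-(d k : ℤ)) (-(l k : ℤ)) ≤ m k ∧
    m k ≤ (d k : ℤ) * (nDim l + 1) - 1 + min ((d k : ℤ) - l k) 0 := by
  classical
  obtain ⟨hK1, hK2⟩ := hdet
  have hN0 : 0 ≤ nDim l := Finset.sum_nonneg fun i _ => by positivity
  set A := (Finset.Icc (0 : ℤ) (nDim l + 1)).filter (fun t => DetBounds.Adm l d m t) with hA
  have hAne : A.Nonempty := by
    obtain ⟨p, h1, h2, h3⟩ := DetBounds.exists_adm l d m hd hl
    exact ⟨p, by rw [hA]; simp only [Finset.mem_filter, Finset.mem_Icc]; exact ⟨⟨h1, h2⟩, h3⟩⟩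
  obtain ⟨p1, hp1mem, hp1min⟩ : ∃ p ∈ A, ∀ t ∈ A, p ≤ t :=
    ⟨A.min' hAne, A.min'_mem _, fun t ht => A.min'_le t ht⟩
  obtain ⟨p2, hp2mem, hp2max⟩ : ∃ p ∈ A, ∀ t ∈ A, t ≤ p :=
    ⟨A.max' hAne, A.max'_mem _, fun t ht => A.le_max' t ht⟩
  have hp12 : p1 ≤ p2 := hp1min p2 hp2mem
  rw [hA, Finset.mem_filter, Finset.mem_Icc] at hp1mem hp2mem
  obtain ⟨⟨hp10, hp11⟩, hp1adm⟩ := hp1mem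
  obtain ⟨⟨hp20, hp21⟩, hp2adm⟩ := hp2mem
  have hmin : ∀ t, 0 ≤ t → t < p1 → ¬ DetBounds.Adm l d m t := by
    intro t h0 hlt hadm
    have ht : t ∈ A := by
      rw [hA]; simp only [Finset.mem_filter, Finset.mem_Icc]; exact ⟨⟨h0, by omega⟩, hadm⟩
    have := hp1min t ht
    omega
  have hmax : ∀ t, t ≤ nDim l + 1 → p2 < t → ¬ DetBounds.Adm l d m t := by
    intro t h0 hlt hadm
    have ht : t ∈ A := by
      rw [hA]; simp only [Finset.mem_filter, Finset.mem_Icc]; exact ⟨⟨by omega, h0⟩, hadm⟩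
    have := hp2max t ht
    omega
  have hne1 : ∀ p, 0 ≤ p → p ≤ nDim l + 1 → DetBounds.Adm l d m p →
      DetBounds.nuf l d m p ≠ -1 := by
    intro p h0 h1 hadm hnu
    exact hK1 p h0 h1 (DetBounds.Jset l d m p) hnu (DetBounds.summand_of_adm l d m hadm)
  have hne2 : ∀ p, 0 ≤ p → p ≤ nDim l + 1 → DetBounds.Adm l d m p →
      DetBounds.nuf l d m p ≠ 2 := by
    intro p h0 h1 hadm hnu
    exact hK2 p h0 h1 (DetBounds.Jset l d m p) hnu (DetBounds.summand_of_adm l d m hadm)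
  constructor
  · by_contra hcon
    push_neg at hcon
    have hk : m k ≤ -(d k : ℤ) - 1 ∨ m k ≤ -(l k : ℤ) - 1 := by
      rcases lt_max_iff.1 hcon with h | h
      · left; omega
      · right; omega
    have hlo := DetBounds.nu_min_le_neg l d m hd hl hp10 hp1adm hmin k hk
    have hhi := DetBounds.nu_max_ge l d m hd hl hp21 hp2adm hmax
    obtain ⟨p, hpl, hpr, hpadm, hpnu⟩ := DetBounds.ivt_s8 l d m (-1) hd hl (p2 - p1).toNat
      p1 p2 (by omega) hp1adm hp2adm hlo (by omega)
    exact hne1 p (by omega) (by omega) hpadm hpnu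
  · by_contra hcon
    push_neg at hcon
    have hcomm : (d k : ℤ) * (nDim l + 1) = (nDim l + 1) * d k := mul_comm _ _
    have hm2 : (nDim l + 2) * (d k : ℤ) = (nDim l + 1) * d k + d k := by ring
    have hk : (nDim l + 1) * d k ≤ m k ∨
        ((nDim l + 2) * d k - l k ≤ m k ∧ m k ≤ (nDim l + 1) * (d k : ℤ) - 1) := by
      rcases le_or_gt ((l k : ℤ)) (d k) with h | h
      · have hm : min ((d k : ℤ) - l k) 0 = 0 := min_eq_right (by omega)
        rw [hm] at hcon
        left; omega
      · have hm : min ((d k : ℤ) - l k) 0 = (d k : ℤ) - l k := min_eq_left (by omega)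
        rw [hm] at hcon
        rcases le_or_gt (m k) ((nDim l + 1) * (d k : ℤ) - 1) with h2 | h2
        · right; exact ⟨by omega, h2⟩
        · left; omega
    have hlo := DetBounds.nu_min_le l d m hd hl hp10 hp1adm hmin
    have hhi := DetBounds.nu_max_ge_two l d m hd hl hp21 hp2adm hmax k hk
    obtain ⟨p, hpl, hpr, hpadm, hpnu⟩ := DetBounds.ivt_s8 l d m 2 hd hl (p2 - p1).toNat
      p1 p2 (by omega) hp1adm hp2adm (by omega) hhi
    exact hne2 p (by omega) (by omega) hpadm hpnu
end

section
/- Suppose 0 ≤ δ_k ≤ 2 for all k = 1,…,r and let π be any permutation of {1,…,r}. Then the degree vector m^π ∈ ℤ^r defined by m^π_k = (1 − δ_k + Σ_{j : π(j) ≥ π(k)} l_j)·d_k − l_k is determinantal; moreover K_0(m^π) ≠ 0 and K_1(m^π) ≠ 0. -/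
open Finset

lemma my_ceil_mul_ge (l d : ℕ) (hd : 0 < d) : (l : ℤ) ≤ ⌈(l : ℚ) / (d : ℚ)⌉ * d := by
  have hdq : (0:ℚ) < d := by exact_mod_cast hd
  have h := Int.le_ceil ((l : ℚ) / (d : ℚ))
  rw [div_le_iff₀ hdq] at h
  exact_mod_cast h

lemma my_ceil_mul_lt (l d : ℕ) (hd : 0 < d) :
    (⌈(l : ℚ) / (d : ℚ)⌉ - 1) * d < (l : ℤ) := by
  have hdq : (0:ℚ) < d := by exact_mod_cast hd
  have h := Int.ceil_lt_add_one ((l : ℚ) / (d : ℚ))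
  have h2 : ((⌈(l : ℚ) / (d : ℚ)⌉ : ℚ) - 1) < (l : ℚ) / d := by linarith
  rw [lt_div_iff₀ hdq] at h2
  exact_mod_cast h2

/-- `S_k = Σ_{π(j) ≥ π(k)} l_j`. -/
def Ssum {r : ℕ} (l : Fin r → ℕ) (π : Equiv.Perm (Fin r)) (k : Fin r) : ℤ :=
  ∑ j ∈ Finset.univ.filter (fun j => π k ≤ π j), (l j : ℤ)

/-- If `0 ≤ δ_k ≤ 2` for all `k` and `π` is any permutation, then the degree vector
`m^π_k = (1 − δ_k + Σ_{π(j) ≥ π(k)} l_j) d_k − l_k` is determinantal, with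
`K_0(m^π) ≠ 0` and `K_1(m^π) ≠ 0`. -/
theorem explicit_determinantal_vector (r : ℕ) (hr : 0 < r) (l d : Fin r → ℕ) (hl : ∀ k, 0 < l k) (hd : ∀ k, 0 < d k)
    (hδ : ∀ k, 0 ≤ defect l d k ∧ defect l d k ≤ 2) (π : Equiv.Perm (Fin r))
    (mπ : Fin r → ℤ)
    (hm : ∀ k, mπ k =
      (1 - defect l d k +
        ∑ j ∈ Finset.univ.filter (fun j => π k ≤ π j), (l j : ℤ)) * d k - l k) :
    Determinantal l d mπ ∧ ¬ Kvanish l d mπ 0 ∧ ¬ Kvanish l d mπ 1 := by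
  have hlnn : ∀ j : Fin r, (0:ℤ) ≤ (l j : ℤ) := fun j => Int.natCast_nonneg _
  have hd' : ∀ k, (0:ℤ) < d k := fun k => by exact_mod_cast hd k
  have hceil : ∀ k, (⌈(l k : ℚ) / (d k : ℚ)⌉ : ℤ) = (l k : ℤ) - defect l d k := by
    intro k; unfold defect; ring
  have hc1 : ∀ k, (l k : ℤ) ≤ ((l k : ℤ) - defect l d k) * d k := by
    intro k; rw [← hceil k]; exact my_ceil_mul_ge _ _ (hd k)
  have hc2 : ∀ k, ((l k : ℤ) - defect l d k - 1) * d k < (l k : ℤ) := by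
    intro k; rw [← hceil k]; exact my_ceil_mul_lt _ _ (hd k)
  have hm' : ∀ k, mπ k = (1 - defect l d k + Ssum l π k) * d k - l k := hm
  have hSn : ∀ k, (l k : ℤ) ≤ Ssum l π k := by
    intro k
    exact Finset.single_le_sum (fun j _ => hlnn j) (by simp)
  -- condition for k ∈ J
  have hB : ∀ k (p : ℤ), mπ k - p * d k ≤ -(l k : ℤ) - 1 →
      Ssum l π k + 2 - defect l d k ≤ p := by
    intro k p h
    rw [hm' k] at h
    have hlt : (1 - defect l d k + Ssum l π k) * d k < p * d k := by linarith
    have := lt_of_mul_lt_mul_right hlt (hd' k).le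
    linarith
  -- condition for k ∉ J
  have hA : ∀ k (p : ℤ), 0 ≤ mπ k - p * d k → p ≤ Ssum l π k + 1 - l k := by
    intro k p h
    rw [hm' k] at h
    by_contra hcon
    push_neg at hcon
    have h1 : (Ssum l π k + 2 - l k) * d k ≤ p * d k :=
      mul_le_mul_of_nonneg_right (by linarith) (hd' k).le
    nlinarith [hc2 k]
  -- main bound: any nonzero summand has 0 ≤ ν ≤ 1
  have key : ∀ p : ℤ, 0 ≤ p → p ≤ nDim l + 1 → ∀ J : Finset (Fin r),
      SummandNonzero l d mπ p J →
      0 ≤ p - ∑ k ∈ J, (l k : ℤ) ∧ p - ∑ k ∈ J, (l k : ℤ) ≤ 1 := by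
    intro p hp0 hpn J hsz
    obtain ⟨hJ, hJc⟩ := hsz
    constructor
    · rcases J.eq_empty_or_nonempty with h | h
      · subst h; simpa using hp0
      · obtain ⟨k, hkJ, hmin⟩ := Finset.exists_min_image J (fun j => π j) h
        have hsub : J ⊆ Finset.univ.filter (fun j => π k ≤ π j) := by
          intro j hj; simp only [Finset.mem_filter, Finset.mem_univ, true_and]
          exact hmin j hj
        have hsum : ∑ j ∈ J, (l j : ℤ) ≤ Ssum l π k :=
          Finset.sum_le_sum_of_subset_of_nonneg hsub (fun j _ _ => hlnn j)
        have hp := hB k p (hJ k hkJ)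
        have := (hδ k).2
        linarith
    · rcases eq_or_ne J Finset.univ with h | h
      · subst h
        have : ∑ k ∈ Finset.univ, (l k : ℤ) = nDim l := rfl
        linarith
      · obtain ⟨k0, hk0⟩ : ∃ k, k ∉ J := by
          by_contra hc; push_neg at hc
          exact h (Finset.eq_univ_iff_forall.mpr hc)
        obtain ⟨k, hkmem, hmax⟩ := Finset.exists_max_image
          (Finset.univ.filter (fun j => j ∉ J)) (fun j => π j) ⟨k0, by simp [hk0]⟩
        have hkc : k ∉ J := by simpa using hkmem
        have hins : Finset.univ.filter (fun j => π k ≤ π j)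
            = insert k (Finset.univ.filter (fun j => π k < π j)) := by
          ext j
          simp only [Finset.mem_filter, Finset.mem_univ, true_and, Finset.mem_insert]
          constructor
          · intro hle
            rcases eq_or_lt_of_le hle with heq | hlt
            · exact Or.inl (π.injective heq.symm)
            · exact Or.inr hlt
          · rintro (rfl | hlt)
            · exact le_refl _
            · exact le_of_lt hlt
        have hdecomp : Ssum l π k
            = (l k : ℤ) + ∑ j ∈ Finset.univ.filter (fun j => π k < π j), (l j : ℤ) := by
          rw [show Ssum l π k = ∑ j ∈ Finset.univ.filter (fun j => π k ≤ π j), (l j : ℤ) from rfl,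
            hins, Finset.sum_insert (by simp)]
        have hsub : Finset.univ.filter (fun j => π k < π j) ⊆ J := by
          intro j hj
          simp only [Finset.mem_filter, Finset.mem_univ, true_and] at hj
          by_contra hjn
          exact absurd (hmax j (by simp [hjn])) (not_le.mpr hj)
        have hsum : ∑ j ∈ Finset.univ.filter (fun j => π k < π j), (l j : ℤ)
            ≤ ∑ j ∈ J, (l j : ℤ) :=
          Finset.sum_le_sum_of_subset_of_nonneg hsub (fun j _ _ => hlnn j)
        have hp := hA k p (hJc k hkc)
        linarith
  -- m_k ≥ d_k, hence nonzero summands at (0,∅) and (1,∅)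
  have hm1 : ∀ k, (d k : ℤ) ≤ mπ k := by
    intro k
    have h1 := hc1 k
    have h4 : (0:ℤ) ≤ (Ssum l π k - l k) * d k :=
      mul_nonneg (by linarith [hSn k]) (hd' k).le
    rw [hm' k]
    nlinarith
  have hnz : ∀ p : ℤ, p = 0 ∨ p = 1 → SummandNonzero l d mπ p ∅ := by
    intro p hp
    refine ⟨by simp, fun k _ => ?_⟩
    have h1 := hm1 k
    have h2 := (hd' k)
    rcases hp with rfl | rfl <;> simp <;> linarith
  have hn0 : (0:ℤ) ≤ nDim l := Finset.sum_nonneg fun k _ => hlnn k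
  refine ⟨⟨?_, ?_⟩, ?_, ?_⟩
  · intro p hp0 hpn J hν hsz
    have := key p hp0 hpn J hsz
    omega
  · intro p hp0 hpn J hν hsz
    have := key p hp0 hpn J hsz
    omega
  · intro h
    exact h 0 le_rfl (by linarith) ∅ (by simp) (hnz 0 (Or.inl rfl))
  · intro h
    exact h 1 one_pos.le (by linarith) ∅ (by simp) (hnz 1 (Or.inr rfl))
end

section
/- Suppose 0 ≤ δ_k ≤ 1 for all k = 1,…,r and let π be any permutation of {1,…,r}. Then the degree vector m^π ∈ ℤ^r defined by m^π_k = (−δ_k + Σ_{j : π(j) ≥ π(k)} l_j)·d_k − l_k is determinantal; moreover K_0(m^π) ≠ 0 and K_1(m^π) ≠ 0. -/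
open Finset

lemma ceil_bounds_aux {l d : ℕ} (hd : 0 < d) :
    (l : ℤ) ≤ ⌈(l : ℚ) / (d : ℚ)⌉ * d ∧ (⌈(l : ℚ) / (d : ℚ)⌉ - 1) * d < l := by
  have hd' : (0 : ℚ) < d := by exact_mod_cast hd
  constructor
  · have h := Int.le_ceil ((l : ℚ) / (d : ℚ))
    rw [div_le_iff₀ hd'] at h
    exact_mod_cast h
  · have h := Int.ceil_lt_add_one ((l : ℚ) / (d : ℚ))
    have h2 : ((⌈(l : ℚ) / (d : ℚ)⌉ : ℚ) - 1) * d < l := by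
      rw [← lt_div_iff₀ hd']; linarith
    exact_mod_cast h2

/-- If `0 ≤ δ_k ≤ 1` for all `k` and `π` is any permutation, then the degree vector
`m^π_k = (−δ_k + Σ_{π(j) ≥ π(k)} l_j) d_k − l_k` is determinantal, with
`K_0(m^π) ≠ 0` and `K_1(m^π) ≠ 0`. -/
theorem explicit_determinantal_vector' (r : ℕ) (hr : 0 < r) (l d : Fin r → ℕ) (hl : ∀ k, 0 < l k) (hd : ∀ k, 0 < d k)
    (hδ : ∀ k, 0 ≤ defect l d k ∧ defect l d k ≤ 1) (π : Equiv.Perm (Fin r))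
    (mπ : Fin r → ℤ)
    (hm : ∀ k, mπ k =
      (- defect l d k +
        ∑ j ∈ Finset.univ.filter (fun j => π k ≤ π j), (l j : ℤ)) * d k - l k) :
    Determinantal l d mπ ∧ ¬ Kvanish l d mπ 0 ∧ ¬ Kvanish l d mπ 1 := by
  classical
  set n : ℤ := nDim l with hn
  have hn0 : 0 ≤ n := Finset.sum_nonneg (fun k _ => by positivity)
  set S : Fin r → ℤ :=
    fun k => ∑ j ∈ Finset.univ.filter (fun j => π k ≤ π j), (l j : ℤ) with hSdef
  have hSl : ∀ k, (l k : ℤ) ≤ S k := by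
    intro k
    apply Finset.single_le_sum (f := fun j => (l j : ℤ)) (fun j _ => by positivity)
    simp
  have hSn : ∀ k, S k ≤ n := by
    intro k
    apply Finset.sum_le_sum_of_subset_of_nonneg (Finset.filter_subset _ _)
    intro j _ _; positivity
  have hdef : ∀ k, defect l d k = (l k : ℤ) - ⌈(l k : ℚ) / (d k : ℚ)⌉ := fun k => rfl
  have hd1 : ∀ k, (1 : ℤ) ≤ d k := fun k => by exact_mod_cast hd k
  -- key implications from summand nonvanishing
  have hA : ∀ (p : ℤ) (k : Fin r), mπ k - p * d k ≤ -(l k : ℤ) - 1 → S k ≤ p := by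
    intro p k h
    rw [hm k] at h
    by_contra hc
    push_neg at hc
    have hp1 : p + 1 ≤ S k := hc
    have hδ1 := (hδ k).2
    have hA0 : 0 ≤ S k - defect l d k - p := by linarith
    have := mul_nonneg hA0 (by linarith [hd1 k] : (0 : ℤ) ≤ d k)
    nlinarith [hl k]
  have hB : ∀ (p : ℤ) (k : Fin r), 0 ≤ mπ k - p * d k → p ≤ S k - l k := by
    intro p k h
    rw [hm k] at h
    set c : ℤ := ⌈(l k : ℚ) / (d k : ℚ)⌉ with hc
    obtain ⟨hc1, hc2⟩ := ceil_bounds_aux (l := l k) (d := d k) (hd k)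
    have hδc : defect l d k = (l k : ℤ) - c := hdef k
    by_contra hcon
    push_neg at hcon
    have h1 : S k + c - l k - p ≤ c - 1 := by linarith
    have h2 := mul_le_mul_of_nonneg_right h1 (by linarith [hd1 k] : (0 : ℤ) ≤ d k)
    rw [hδc] at h
    nlinarith
  have key : ∀ p : ℤ, 0 ≤ p → p ≤ n + 1 → ∀ J : Finset (Fin r),
      SummandNonzero l d mπ p J →
      0 ≤ p - ∑ k ∈ J, (l k : ℤ) ∧ p - ∑ k ∈ J, (l k : ℤ) ≤ 1 := by
    intro p hp0 hp1 J hsum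
    obtain ⟨hJ, hJc⟩ := hsum
    constructor
    · rcases J.eq_empty_or_nonempty with hJe | hJne
      · simp [hJe]; exact hp0
      · obtain ⟨k1, hk1J, hk1min⟩ := J.exists_min_image π hJne
        have hsub : J ⊆ Finset.univ.filter (fun j => π k1 ≤ π j) := by
          intro j hj
          simp only [Finset.mem_filter, Finset.mem_univ, true_and]
          exact hk1min j hj
        have h1 : ∑ k ∈ J, (l k : ℤ) ≤ S k1 :=
          Finset.sum_le_sum_of_subset_of_nonneg hsub (fun j _ _ => by positivity)
        have h2 : S k1 ≤ p := hA p k1 (hJ k1 hk1J)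
        linarith
    · rcases eq_or_ne J Finset.univ with hJu | hJu
      · have : ∑ k ∈ J, (l k : ℤ) = n := by rw [hJu]; rfl
        linarith
      · have hJcne : (Jᶜ : Finset (Fin r)).Nonempty := by
          rw [Finset.nonempty_iff_ne_empty]
          intro hemp
          exact hJu (by simpa using congrArg compl hemp)
        obtain ⟨k0, hk0, hk0max⟩ := (Jᶜ : Finset (Fin r)).exists_max_image π hJcne
        have hk0J : k0 ∉ J := by simpa using hk0
        have hple : p ≤ S k0 - l k0 := hB p k0 (hJc k0 hk0J)
        have hsplit : Finset.univ.filter (fun j => π k0 ≤ π j) =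
            insert k0 (Finset.univ.filter (fun j => π k0 < π j)) := by
          ext j
          simp only [Finset.mem_filter, Finset.mem_univ, true_and, Finset.mem_insert]
          constructor
          · intro hle
            rcases lt_or_eq_of_le hle with h | h
            · exact Or.inr h
            · exact Or.inl (π.injective h.symm)
          · rintro (rfl | h)
            · exact le_rfl
            · exact le_of_lt h
        have hk0notin : k0 ∉ Finset.univ.filter (fun j => π k0 < π j) := by simp
        have hSsplit : S k0 = (l k0 : ℤ) +
            ∑ j ∈ Finset.univ.filter (fun j => π k0 < π j), (l j : ℤ) := by
          rw [hSdef]; simp only []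
          rw [hsplit, Finset.sum_insert hk0notin]
        have hsub : Finset.univ.filter (fun j => π k0 < π j) ⊆ J := by
          intro j hj
          simp only [Finset.mem_filter, Finset.mem_univ, true_and] at hj
          by_contra hjJ
          have := hk0max j (by simpa using hjJ)
          exact absurd hj (not_lt.mpr this)
        have h1 : ∑ j ∈ Finset.univ.filter (fun j => π k0 < π j), (l j : ℤ) ≤
            ∑ k ∈ J, (l k : ℤ) :=
          Finset.sum_le_sum_of_subset_of_nonneg hsub (fun j _ _ => by positivity)
        linarith
  refine ⟨⟨?_, ?_⟩, ?_, ?_⟩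
  · intro p hp0 hp1 J hν hsum
    have := key p hp0 hp1 J hsum
    omega
  · intro p hp0 hp1 J hν hsum
    have := key p hp0 hp1 J hsum
    omega
  · intro hK
    apply hK 0 le_rfl (by linarith) ∅ (by simp)
    constructor
    · intro k hk; simp at hk
    · intro k _
      rw [hm k]
      set c : ℤ := ⌈(l k : ℚ) / (d k : ℚ)⌉ with hc
      obtain ⟨hc1, hc2⟩ := ceil_bounds_aux (l := l k) (d := d k) (hd k)
      have hδc : defect l d k = (l k : ℤ) - c := hdef k
      have hcS : c ≤ S k - defect l d k := by rw [hδc]; linarith [hSl k]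
      have := mul_le_mul_of_nonneg_right hcS (by linarith [hd1 k] : (0 : ℤ) ≤ d k)
      nlinarith
  · intro hK
    apply hK (n + 1) (by linarith) le_rfl Finset.univ
    · have : ∑ k ∈ Finset.univ, (l k : ℤ) = n := rfl
      rw [this]; ring
    constructor
    · intro k _
      rw [hm k]
      have hδ0 := (hδ k).1
      have h1 : -defect l d k + S k - (n + 1) ≤ -1 := by linarith [hSn k]
      have := mul_le_mul_of_nonneg_right h1 (by linarith [hd1 k] : (0 : ℤ) ≤ d k)
      nlinarith [hd1 k, hl k]
    · intro k hk; simp at hk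
end

section
/- Assume m, m′ ∈ ℤ^r satisfy m + m′ = ρ, the critical degree vector. Then dim K_ν(m) = dim K_{1−ν}(m′) for every ν ∈ ℤ. In particular, m is determinantal if and only if m′ is determinantal, and in that case the associated matrices have the same size: dim K_0(m) = dim K_1(m′). -/
open Finset

section DualityAux

variable {r : ℕ}

private lemma nDim_cast (l : Fin r → ℕ) : nDim l = ((∑ k, l k : ℕ) : ℤ) := by
  simp [nDim]

private lemma key_eq (l d : Fin r → ℕ) (m m' : Fin r → ℤ)
    (hsum : ∀ k, m k + m' k = critical l d k) (p : ℤ) (k : Fin r) :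
    m' k - (nDim l + 1 - p) * d k = -(l k : ℤ) - 1 - (m k - p * d k) := by
  have h := hsum k
  simp only [critical] at h
  linear_combination h

private lemma hsum_symm (l d : Fin r → ℕ) (m m' : Fin r → ℤ)
    (hsum : ∀ k, m k + m' k = critical l d k) :
    ∀ k, m' k + m k = critical l d k := fun k => by linarith [hsum k]

private lemma summand_dual (l d : Fin r → ℕ) (m m' : Fin r → ℤ)
    (hsum : ∀ k, m k + m' k = critical l d k) (p : ℤ) (J : Finset (Fin r)) :
    SummandNonzero l d m p J ↔ SummandNonzero l d m' (nDim l + 1 - p) Jᶜ := by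
  constructor
  · rintro ⟨h1, h2⟩
    refine ⟨fun k hk => ?_, fun k hk => ?_⟩
    · rw [key_eq l d m m' hsum]
      have := h2 k (by simpa using hk)
      linarith
    · rw [key_eq l d m m' hsum]
      have hkJ : k ∈ J := by simpa using hk
      have := h1 k hkJ
      linarith
  · rintro ⟨h1, h2⟩
    refine ⟨fun k hk => ?_, fun k hk => ?_⟩
    · have := h2 k (by simp [hk])
      rw [key_eq l d m m' hsum] at this
      linarith
    · have := h1 k (by simpa using hk)
      rw [key_eq l d m m' hsum] at this
      linarith

private lemma dimSummand_dual (l d : Fin r → ℕ) (m m' : Fin r → ℤ)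
    (hsum : ∀ k, m k + m' k = critical l d k) (p : ℤ) (J : Finset (Fin r)) :
    dimSummand l d m p J = dimSummand l d m' (nDim l + 1 - p) Jᶜ := by
  classical
  by_cases h : SummandNonzero l d m p J
  · rw [dimSummand, if_pos h, dimSummand,
      if_pos ((summand_dual l d m m' hsum p J).mp h), compl_compl]
    have e1 : ∀ k : Fin r, (nDim l + 1 - p) * d k - m' k - 1 = m k - p * d k + l k := by
      intro k
      have := key_eq l d m m' hsum p k
      linarith
    have e2 : ∀ k : Fin r, m' k - (nDim l + 1 - p) * d k + l k = p * d k - m k - 1 := by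
      intro k
      have := key_eq l d m m' hsum p k
      linarith
    have q1 : (∏ k ∈ Jᶜ, ((nDim l + 1 - p) * d k - m' k - 1).toNat.choose (l k))
        = ∏ k ∈ Jᶜ, (m k - p * d k + l k).toNat.choose (l k) :=
      Finset.prod_congr rfl (fun k _ => by rw [e1 k])
    have q2 : (∏ k ∈ J, (m' k - (nDim l + 1 - p) * d k + l k).toNat.choose (l k))
        = ∏ k ∈ J, (p * d k - m k - 1).toNat.choose (l k) :=
      Finset.prod_congr rfl (fun k _ => by rw [e2 k])
    rw [q1, q2, mul_comm]
  · rw [dimSummand, if_neg h, dimSummand,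
      if_neg (fun hc => h ((summand_dual l d m m' hsum p J).mpr hc))]

private lemma sum_compl_eq (l : Fin r → ℕ) (J : Finset (Fin r)) :
    ∑ k ∈ Jᶜ, (l k : ℤ) = nDim l - ∑ k ∈ J, (l k : ℤ) := by
  have := Finset.sum_add_sum_compl J (fun k => (l k : ℤ))
  rw [nDim]
  linarith

private lemma kvanish_dual (l d : Fin r → ℕ) (m m' : Fin r → ℤ)
    (hsum : ∀ k, m k + m' k = critical l d k) (ν : ℤ)
    (h : Kvanish l d m ν) : Kvanish l d m' (1 - ν) := by
  intro p hp0 hp1 J hJ hS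
  have hS' : SummandNonzero l d m (nDim l + 1 - p) Jᶜ :=
    (summand_dual l d m' m (hsum_symm l d m m' hsum) p J).mp hS
  have hc := sum_compl_eq l J
  exact h (nDim l + 1 - p) (by linarith) (by linarith) Jᶜ (by linarith) hS'

private lemma dimK_dual (l d : Fin r → ℕ) (m m' : Fin r → ℤ)
    (hsum : ∀ k, m k + m' k = critical l d k) (ν : ℤ) :
    dimK l d m ν = dimK l d m' (1 - ν) := by
  classical
  unfold dimK
  conv_rhs => rw [← Finset.sum_range_reflect]
  refine Finset.sum_congr rfl fun p hp => ?_
  rw [Finset.mem_range] at hp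
  have hple : p ≤ (∑ k, l k) + 1 := by omega
  have h1 : (∑ k, l k) + 2 - 1 - p = (∑ k, l k) + 1 - p := by omega
  have hcast : (((∑ k, l k) + 1 - p : ℕ) : ℤ) = nDim l + 1 - (p : ℤ) := by
    rw [nDim_cast]; omega
  rw [h1, Nat.choose_symm hple, hcast]
  congr 1
  refine Finset.sum_nbij' (fun J => Jᶜ) (fun J => Jᶜ) ?_ ?_ ?_ ?_ ?_
  · intro J hJ
    simp only [Finset.mem_filter, Finset.mem_univ, true_and] at hJ ⊢
    rw [sum_compl_eq l J]
    linarith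
  · intro J hJ
    simp only [Finset.mem_filter, Finset.mem_univ, true_and] at hJ ⊢
    rw [sum_compl_eq l J]
    linarith
  · intro J _; exact compl_compl J
  · intro J _; exact compl_compl J
  · intro J _
    exact dimSummand_dual l d m m' hsum p J

end DualityAux

/-- If `m + m′ = ρ` (the critical degree vector), then `dim K_ν(m) = dim K_{1−ν}(m′)`
for all `ν`; in particular `m` is determinantal iff `m′` is, and then the matrices
have the same size `dim K_0(m) = dim K_1(m′)`. -/
theorem duality_critical (r : ℕ) (hr : 0 < r) (l d : Fin r → ℕ) (hl : ∀ k, 0 < l k) (hd : ∀ k, 0 < d k)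
    (m m' : Fin r → ℤ) (hsum : ∀ k, m k + m' k = critical l d k) :
    (∀ ν : ℤ, dimK l d m ν = dimK l d m' (1 - ν)) ∧
    (Determinantal l d m ↔ Determinantal l d m') ∧
    (Determinantal l d m → dimK l d m 0 = dimK l d m' 1) := by
  constructor
  · intro ν
    exact dimK_dual l d m m' hsum ν
  refine ⟨⟨fun h => ?_, fun h => ?_⟩, fun _ => ?_⟩
  · obtain ⟨h1, h2⟩ := h
    exact ⟨by simpa using kvanish_dual l d m m' hsum 2 h2,
      by simpa using kvanish_dual l d m m' hsum (-1) h1⟩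
  · obtain ⟨h1, h2⟩ := h
    exact ⟨by simpa using kvanish_dual l d m' m (hsum_symm l d m m' hsum) 2 h2,
      by simpa using kvanish_dual l d m' m (hsum_symm l d m m' hsum) (-1) h1⟩
  · simpa using dimK_dual l d m m' hsum 0
end

section
/- A degree vector m ∈ ℤ^r with all coordinates nonnegative yields a pure Sylvester-type matrix if and only if there exists a permutation π of {1,…,r} such that m_j ≥ m^π_j for all j = 1,…,r, where m^π_k = (1 + Σ_{j : π(j) ≥ π(k)} l_j)·d_k − l_k. Moreover, the minimum of dim K_0(m) = ∏_k C(m_k + l_k, l_k) over all m yielding a pure Sylvester-type matrix is attained at m^π for some permutation π. -/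
open Finset

/-!
Write `J(p) = {k | m_k + l_k < p d_k}` and `ν(p) = p − Σ_{k ∈ J(p)} l_k`. The `(p,J)`-summand of `m`
is nonzero exactly when `p` lies in no window `P_k(m)` and `J = J(p)`.

If `m ≥ m^π`, every nonzero summand with `J ≠ ∅` has `ν ≥ 2`. Conversely, suppose some nonempty `J`
had `m_k + l_k < (1 + Σ_J l) d_k` for all `k ∈ J`. Then `ν ≤ 1` at `p₀ = 1 + Σ_J l`; since `ν` rises
by at most one from one window-free `p` to the next and is large for large `p`, it equals `1` at some
window-free `p ≥ p₀`, which gives a nonzero summand with `ν = 1` and `J ≠ ∅`. The resulting Hall-type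
condition on all `J` yields `m ≥ m^π` for the `π` listing the factors by decreasing
`⌊(m_k + l_k)/d_k⌋`. The minimum is attained at some `m^π` because `∏ C(m_k + l_k, l_k)` is
monotone in `m`.
-/

namespace Weyman

variable {r : ℕ} {l d : Fin r → ℕ} {m : Fin r → ℤ}

/-- The integer points of `Pset l d m k`. -/
noncomputable def window (l d : Fin r → ℕ) (m : Fin r → ℤ) (k : Fin r) : Finset ℤ :=
  Ioc (m k / d k) ((m k + l k) / d k)

def WindowFree (l d : Fin r → ℕ) (m : Fin r → ℤ) (p : ℤ) : Prop :=
  ∀ k, p ∉ window l d m k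

def summandIdx (l d : Fin r → ℕ) (m : Fin r → ℤ) (p : ℤ) : Finset (Fin r) :=
  univ.filter fun k ↦ m k + l k < p * d k

def nu (l d : Fin r → ℕ) (m : Fin r → ℤ) (p : ℤ) : ℤ :=
  p - ∑ k ∈ summandIdx l d m p, (l k : ℤ)

lemma mem_window {k : Fin r} (hd : 0 < d k) {x : ℤ} :
    x ∈ window l d m k ↔ m k < x * d k ∧ x * d k ≤ m k + l k := by
  have hd' : (0 : ℤ) < d k := by exact_mod_cast hd
  rw [window, mem_Ioc, Int.ediv_lt_iff_lt_mul hd', Int.le_ediv_iff_mul_le hd']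

lemma card_window_le {k : Fin r} (hd : 0 < d k) : #(window l d m k) ≤ l k := by
  have hd' : (0 : ℤ) < d k := by exact_mod_cast hd
  have hlo := Int.lt_ediv_add_one_mul_self (m k) hd'
  have hhi := Int.ediv_mul_le (m k + l k) hd'.ne'
  suffices (m k + l k) / d k - m k / d k ≤ l k by
    rw [window, Int.card_Ioc]; omega
  nlinarith

@[simp]
lemma mem_summandIdx {p : ℤ} {k : Fin r} : k ∈ summandIdx l d m p ↔ m k + l k < p * d k := by
  simp [summandIdx]

lemma summandIdx_mono : Monotone (summandIdx l d m) := by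
  intro p q hpq k
  simp only [mem_summandIdx]
  have : p * (d k : ℤ) ≤ q * d k := by gcongr
  omega

lemma sum_summandIdx_le_nDim (p : ℤ) : ∑ k ∈ summandIdx l d m p, (l k : ℤ) ≤ nDim l :=
  sum_le_sum_of_subset_of_nonneg (subset_univ _) fun _ _ _ ↦ by positivity

lemma summandNonzero_summandIdx (hd : ∀ k, 0 < d k) {p : ℤ} (hp : WindowFree l d m p) :
    SummandNonzero l d m p (summandIdx l d m p) := by
  refine ⟨fun k hk ↦ by rw [mem_summandIdx] at hk; omega, fun k hk ↦ ?_⟩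
  have := hp k
  rw [mem_window (hd k)] at this
  rw [mem_summandIdx] at hk
  omega

lemma nu_succ_le (p : ℤ) : nu l d m (p + 1) ≤ nu l d m p + 1 := by
  have : ∑ k ∈ summandIdx l d m p, (l k : ℤ) ≤ ∑ k ∈ summandIdx l d m (p + 1), (l k : ℤ) :=
    sum_le_sum_of_subset_of_nonneg (summandIdx_mono (by omega)) fun _ _ _ ↦ by positivity
  simp only [nu]
  omega

/-- Each point of `[u, v)` lies in the window of a factor entering `J` between `u` and `v`. -/
lemma nu_le_of_forall_not_windowFree (hd : ∀ k, 0 < d k) {u v : ℤ} (huv : u ≤ v)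
    (hv : WindowFree l d m v) (hgap : ∀ x ∈ Ico u v, ¬ WindowFree l d m x) :
    nu l d m v ≤ nu l d m u := by
  classical
  set T := summandIdx l d m v \ summandIdx l d m u
  have hcover : Ico u v ⊆ T.biUnion (window l d m) := by
    intro x hx
    obtain ⟨k, hk⟩ := not_forall_not.mp (hgap x hx)
    have hvk := hv k
    have hxk := (mem_window (hd k)).mp hk
    rw [mem_window (hd k)] at hvk
    rw [mem_Ico] at hx
    have hux : u * (d k : ℤ) ≤ x * d k := by gcongr; exact hx.1
    have hxv : x * (d k : ℤ) ≤ v * d k := by gcongr; exact hx.2.le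
    simp only [mem_biUnion, T, mem_sdiff, mem_summandIdx]
    exact ⟨k, ⟨by omega, by omega⟩, hk⟩
  have hcard : v - u ≤ ∑ k ∈ T, (l k : ℤ) := by
    have := (card_le_card hcover).trans (card_biUnion_le.trans
      (sum_le_sum fun k _ ↦ card_window_le (m := m) (hd k)))
    rw [Int.card_Ico] at this
    have : ((v - u).toNat : ℤ) ≤ ∑ k ∈ T, (l k : ℤ) := by exact_mod_cast this
    omega
  rw [sum_sdiff_eq_sub (summandIdx_mono huv)] at hcard
  simp only [nu]
  omega

lemma exists_windowFree_one_le_nu (hd : ∀ k, 0 < d k) (c : ℤ) :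
    ∃ w, c ≤ w ∧ WindowFree l d m w ∧ 1 ≤ nu l d m w := by
  set w := |c| + nDim l + 1 + ∑ k, |m k + l k| with hw
  have hn : 0 ≤ nDim l := sum_nonneg fun _ _ ↦ by positivity
  have hc := abs_nonneg c
  have hbig : ∀ k, m k + l k < w * d k := fun k ↦ by
    have hk := single_le_sum (f := fun k ↦ |m k + l k|) (fun _ _ ↦ abs_nonneg _) (mem_univ k)
    have hwd : w ≤ w * d k := le_mul_of_one_le_right (by positivity) (by exact_mod_cast hd k)
    have := le_abs_self (m k + l k)
    omega
  have hJ : summandIdx l d m w = univ := eq_univ_of_forall fun k ↦ mem_summandIdx.mpr (hbig k)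
  have hsum : 0 ≤ ∑ k, |m k + l k| := sum_nonneg fun _ _ ↦ abs_nonneg _
  refine ⟨w, by have := le_abs_self c; omega, fun k hk ↦ ?_, ?_⟩
  · have := hbig k
    rw [mem_window (hd k)] at hk
    omega
  · rw [nu, hJ, ← nDim]
    omega

lemma exists_windowFree_nu_eq_one (hd : ∀ k, 0 < d k) {p₀ : ℤ} (hp₀ : nu l d m p₀ ≤ 1) :
    ∃ q, p₀ ≤ q ∧ WindowFree l d m q ∧ nu l d m q = 1 := by
  obtain ⟨q, ⟨hp₀q, hq, hnu⟩, hmin⟩ :=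
    Int.exists_least_of_bdd (P := fun q ↦ p₀ ≤ q ∧ WindowFree l d m q ∧ 1 ≤ nu l d m q)
      ⟨p₀, fun _ h ↦ h.1⟩ (exists_windowFree_one_le_nu hd p₀)
  refine ⟨q, hp₀q, hq, le_antisymm ?_ hnu⟩
  by_cases hprev : ∃ x, p₀ ≤ x ∧ x < q ∧ WindowFree l d m x
  · obtain ⟨p, ⟨hp₀p, hpq, hp⟩, hmax⟩ :=
      Int.exists_greatest_of_bdd (P := fun x ↦ p₀ ≤ x ∧ x < q ∧ WindowFree l d m x)
        ⟨q, fun _ h ↦ h.2.1.le⟩ hprev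
    have hnup : nu l d m p < 1 := by
      by_contra! h
      exact (hmin p ⟨hp₀p, hp, h⟩).not_gt hpq
    have hgap : ∀ x ∈ Ico (p + 1) q, ¬ WindowFree l d m x := fun x hx hx' ↦ by
      rw [mem_Ico] at hx
      have := hmax x ⟨by omega, hx.2, hx'⟩
      omega
    have := nu_le_of_forall_not_windowFree hd hpq hq hgap
    have := nu_succ_le (l := l) (d := d) (m := m) p
    omega
  · push Not at hprev
    have := nu_le_of_forall_not_windowFree hd hp₀q hq fun x hx ↦ by
      rw [mem_Ico] at hx
      exact hprev x hx.1 hx.2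
    omega

lemma exists_mem_le_of_pureSylvester (hd : ∀ k, 0 < d k) (h : PureSylvester l d m)
    {J : Finset (Fin r)} (hJ : J.Nonempty) :
    ∃ k ∈ J, (1 + ∑ j ∈ J, (l j : ℤ)) * d k ≤ m k + l k := by
  by_contra! hcon
  set p₀ := 1 + ∑ j ∈ J, (l j : ℤ)
  have hJp₀ : J ⊆ summandIdx l d m p₀ := fun k hk ↦ mem_summandIdx.mpr (hcon k hk)
  have hnu₀ : nu l d m p₀ ≤ 1 := by
    have := sum_le_sum_of_subset_of_nonneg (f := fun k ↦ (l k : ℤ)) hJp₀ fun _ _ _ ↦ by positivity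
    simp only [nu, p₀] at this ⊢
    omega
  obtain ⟨q, hp₀q, hq, hnu⟩ := exists_windowFree_nu_eq_one hd hnu₀
  have hJq : (summandIdx l d m q).Nonempty :=
    hJ.mono (hJp₀.trans (summandIdx_mono hp₀q))
  have hp₀ : 0 ≤ p₀ := by positivity
  have := sum_summandIdx_le_nDim (l := l) (d := d) (m := m) q
  rw [nu] at hnu
  exact h.2.2.2 1 (Or.inr rfl) q (by omega) (by omega) _ hJq.ne_empty hnu
    (summandNonzero_summandIdx hd hq)

/-- Listing the indices by decreasing `b` turns a Hall-type condition into a permutation. -/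
lemma exists_perm_forall_le_of_forall_exists_le (c : Finset (Fin r) → ℤ) (b : Fin r → ℤ)
    (h : ∀ J : Finset (Fin r), J.Nonempty → ∃ k ∈ J, c J ≤ b k) :
    ∃ π : Equiv.Perm (Fin r), ∀ j, c (univ.filter fun i ↦ π j ≤ π i) ≤ b j := by
  set σ := Tuple.sort fun k ↦ -b k
  refine ⟨σ⁻¹, fun j ↦ ?_⟩
  obtain ⟨k, hk, hck⟩ := h (univ.filter fun i ↦ σ⁻¹ j ≤ σ⁻¹ i) ⟨j, by simp⟩
  have hbk : -b (σ (σ⁻¹ j)) ≤ -b (σ (σ⁻¹ k)) :=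
    Tuple.monotone_sort (fun k ↦ -b k) (mem_filter.mp hk).2
  simp only [Equiv.Perm.inv_def, Equiv.apply_symm_apply] at hbk
  omega

lemma exists_perm_mSyl_le_of_pureSylvester (hd : ∀ k, 0 < d k) (h : PureSylvester l d m) :
    ∃ π : Equiv.Perm (Fin r), ∀ j, mSyl l d π j ≤ m j := by
  obtain ⟨π, hπ⟩ := exists_perm_forall_le_of_forall_exists_le
    (fun J ↦ 1 + ∑ j ∈ J, (l j : ℤ)) (fun k ↦ (m k + l k) / d k) fun J hJ ↦ by
      obtain ⟨k, hk, hle⟩ := exists_mem_le_of_pureSylvester hd h hJ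
      exact ⟨k, hk, (Int.le_ediv_iff_mul_le (by exact_mod_cast hd k)).mpr hle⟩
  refine ⟨π, fun j ↦ ?_⟩
  have := (Int.le_ediv_iff_mul_le (by exact_mod_cast hd j)).mp (hπ j)
  rw [mSyl]
  omega

lemma l_le_sum_filter_le (π : Equiv.Perm (Fin r)) (k : Fin r) :
    (l k : ℤ) ≤ ∑ j ∈ univ.filter fun j ↦ π k ≤ π j, (l j : ℤ) :=
  single_le_sum (f := fun j ↦ (l j : ℤ)) (fun _ _ ↦ by positivity) (by simp)

lemma d_le_mSyl (hd : ∀ k, 0 < d k) (π : Equiv.Perm (Fin r)) (k : Fin r) :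
    (d k : ℤ) ≤ mSyl l d π k := by
  have hS := l_le_sum_filter_le (l := l) π k
  have : (l k : ℤ) ≤ l k * d k := le_mul_of_one_le_right (by positivity) (by exact_mod_cast hd k)
  have : (l k : ℤ) * d k ≤ (∑ j ∈ univ.filter fun j ↦ π k ≤ π j, (l j : ℤ)) * d k := by gcongr
  rw [mSyl]
  nlinarith

/-- The factor `k ∈ J` that comes first under `π` bounds `p` through `m_k ≥ m^π_k`. -/
lemma one_add_sum_lt_of_summandNonzero {π : Equiv.Perm (Fin r)}
    (hπ : ∀ j, mSyl l d π j ≤ m j) {p : ℤ} {J : Finset (Fin r)} (hJ : J.Nonempty)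
    (h : SummandNonzero l d m p J) : 1 + ∑ j ∈ J, (l j : ℤ) < p := by
  obtain ⟨k, hkJ, hkmin⟩ := exists_min_image J π hJ
  set S := ∑ j ∈ univ.filter fun j ↦ π k ≤ π j, (l j : ℤ)
  have hJS : ∑ j ∈ J, (l j : ℤ) ≤ S :=
    sum_le_sum_of_subset_of_nonneg (fun j hj ↦ by simpa using hkmin j hj) fun _ _ _ ↦ by
      positivity
  have hk := h.1 k hkJ
  have hmk := hπ k
  rw [mSyl] at hmk
  have : (1 + S) * (d k : ℤ) < p * d k := by linarith
  have := lt_of_mul_lt_mul_right this (by positivity)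
  omega

lemma pureSylvester_of_mSyl_le (hd : ∀ k, 0 < d k) {π : Equiv.Perm (Fin r)}
    (hπ : ∀ j, mSyl l d π j ≤ m j) : PureSylvester l d m := by
  have hdm : ∀ k, (d k : ℤ) ≤ m k := fun k ↦ (d_le_mSyl hd π k).trans (hπ k)
  refine ⟨fun k ↦ (Int.natCast_nonneg _).trans (hdm k), hdm, ?_, ?_⟩
  · intro p hp _ J hν hS
    obtain rfl | hJ := J.eq_empty_or_nonempty
    · simp at hν
      omega
    · have := one_add_sum_lt_of_summandNonzero hπ hJ hS
      omega
  · intro ν hν p _ _ J hJ hνJ hS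
    have := one_add_sum_lt_of_summandNonzero hπ (nonempty_iff_ne_empty.mpr hJ) hS
    omega

lemma prod_choose_le_prod_choose {m m' : Fin r → ℤ} (h : ∀ k, m k ≤ m' k) :
    ∏ k, (m k + l k).toNat.choose (l k) ≤ ∏ k, (m' k + l k).toNat.choose (l k) :=
  prod_le_prod' fun k _ ↦ Nat.choose_le_choose _ (Int.toNat_le_toNat (by linarith [h k]))

end Weyman

open Weyman in
theorem sylvester_characterization_general (r : ℕ) (l d : Fin r → ℕ) (hd : ∀ k, 0 < d k) :
    (∀ m : Fin r → ℤ, (∀ k, 0 ≤ m k) →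
      (PureSylvester l d m ↔ ∃ π : Equiv.Perm (Fin r), ∀ j, mSyl l d π j ≤ m j)) ∧
    ∃ π : Equiv.Perm (Fin r), PureSylvester l d (mSyl l d π) ∧
      ∀ m : Fin r → ℤ, (∀ k, 0 ≤ m k) → PureSylvester l d m →
        (∏ k, ((mSyl l d π k + (l k : ℤ)).toNat.choose (l k))) ≤
          ∏ k, ((m k + (l k : ℤ)).toNat.choose (l k)) := by
  refine ⟨fun m _ ↦ ⟨exists_perm_mSyl_le_of_pureSylvester hd,
    fun ⟨π, hπ⟩ ↦ pureSylvester_of_mSyl_le hd hπ⟩, ?_⟩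
  obtain ⟨π₀, -, hπ₀⟩ := exists_min_image univ
    (fun π ↦ ∏ k, (mSyl l d π k + l k).toNat.choose (l k)) univ_nonempty
  refine ⟨π₀, pureSylvester_of_mSyl_le hd fun _ ↦ le_rfl, fun m _ h ↦ ?_⟩
  obtain ⟨π, hπ⟩ := exists_perm_mSyl_le_of_pureSylvester hd h
  exact (hπ₀ π (mem_univ π)).trans (prod_choose_le_prod_choose hπ)

/-- A nonnegative degree vector `m` yields a pure Sylvester-type matrix iff `m ≥ m^π`
coordinatewise for some permutation `π`; moreover the smallest Sylvester matrix is
attained at some `m^π`. -/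
theorem sylvester_characterization (r : ℕ) (hr : 0 < r) (l d : Fin r → ℕ) (hl : ∀ k, 0 < l k) (hd : ∀ k, 0 < d k) :
    (∀ m : Fin r → ℤ, (∀ k, 0 ≤ m k) →
      (PureSylvester l d m ↔ ∃ π : Equiv.Perm (Fin r), ∀ j, mSyl l d π j ≤ m j)) ∧
    ∃ π : Equiv.Perm (Fin r), PureSylvester l d (mSyl l d π) ∧
      ∀ m : Fin r → ℤ, (∀ k, 0 ≤ m k) → PureSylvester l d m →
        (∏ k, ((mSyl l d π k + (l k : ℤ)).toNat.choose (l k))) ≤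
          ∏ k, ((m k + (l k : ℤ)).toNat.choose (l k)) :=
  sylvester_characterization_general r l d hd
end
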